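/- arXiv:2112.10353 — 7 statements merged into one kernel-verified Lean document; each statement's English description precedes it below -/
import Mathlib

section
/- Let π:(X,T)→(Y,T) be a factor map between minimal flows, let y,y'∈Y, let u be a minimal idempotent of the enveloping semigroup E(X,T) which fixes y, and let v be a minimal idempotent of E(X,T) which fixes y'. Then the sets u·π^{-1}(y) = {u x : x∈π^{-1}(y)} and v·π^{-1}(y') = {v x : x∈π^{-1}(y')} have the same cardinality. -/
/-- The orbit-closure of every point of a flow is dense: a minimal flow. -/
def IsMinimalFlow (T : Type*) (X : Type*) [Group T] [TopologicalSpace X] [MulAction T X] :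
    Prop :=
  ∀ x : X, Dense (MulAction.orbit T x)

/-- A factor map of flows: continuous, surjective, equivariant. -/
def IsFactorMap (T : Type*) {X Y : Type*} [Group T] [TopologicalSpace X] [TopologicalSpace Y]
    [MulAction T X] [MulAction T Y] (π : X → Y) : Prop :=
  Continuous π ∧ Function.Surjective π ∧ ∀ (t : T) (x : X), π (t • x) = t • π x

/-- The enveloping (Ellis) semigroup of a flow: the closure in `X → X` (with the product
topology) of the set of maps given by the action of elements of `T`. -/
def envSemigroup (T : Type*) (X : Type*) [Group T] [TopologicalSpace X] [MulAction T X] :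
    Set (X → X) :=
  closure (Set.range fun t : T => fun x : X => t • x)

/-- A left ideal of the enveloping semigroup. -/
def IsLeftIdeal (T : Type*) {X : Type*} [Group T] [TopologicalSpace X] [MulAction T X]
    (I : Set (X → X)) : Prop :=
  I.Nonempty ∧ I ⊆ envSemigroup T X ∧ ∀ p ∈ envSemigroup T X, ∀ q ∈ I, p ∘ q ∈ I

/-- A minimal left ideal of the enveloping semigroup. -/
def IsMinimalLeftIdeal (T : Type*) {X : Type*} [Group T] [TopologicalSpace X] [MulAction T X]
    (I : Set (X → X)) : Prop :=
  IsLeftIdeal T I ∧ ∀ J : Set (X → X), IsLeftIdeal T J → J ⊆ I → J = I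

/-- A minimal idempotent of the enveloping semigroup: an idempotent lying in some
minimal left ideal. -/
def IsMinimalIdempotent (T : Type*) {X : Type*} [Group T] [TopologicalSpace X] [MulAction T X]
    (u : X → X) : Prop :=
  u ∈ envSemigroup T X ∧ u ∘ u = u ∧ ∃ I : Set (X → X), IsMinimalLeftIdeal T I ∧ u ∈ I

/-- An element `p` of the enveloping semigroup of `(X,T)` fixes `y ∈ Y` (with respect to the
factor map `π`) if `π (p x) = y` for every `x` in the fiber over `y`. -/
def Fixes {X Y : Type*} (π : X → Y) (p : X → X) (y : Y) : Prop :=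
  ∀ x : X, π x = y → π (p x) = y

section Aux

variable {T : Type*} [Group T] {X : Type*} [TopologicalSpace X] [MulAction T X]
  [ContinuousConstSMul T X]

lemma env_smul_comp (t : T) {q : X → X} (hq : q ∈ envSemigroup T X) :
    (fun x => t • q x) ∈ envSemigroup T X := by
  have hc : Continuous fun (r : X → X) => fun x => t • r x :=
    continuous_pi fun x => (continuous_const_smul t).comp (continuous_apply x)
  have hmap : Set.MapsTo (fun (r : X → X) => fun x => t • r x)
      (Set.range fun t' : T => fun x : X => t' • x)
      (Set.range fun t' : T => fun x : X => t' • x) := by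
    rintro r ⟨t', rfl⟩
    exact ⟨t * t', by funext x; simp [mul_smul]⟩
  exact map_mem_closure hc hq hmap

lemma env_comp {p q : X → X} (hp : p ∈ envSemigroup T X) (hq : q ∈ envSemigroup T X) :
    p ∘ q ∈ envSemigroup T X := by
  have hc : Continuous fun (r : X → X) => r ∘ q :=
    continuous_pi fun x => continuous_apply (q x)
  have hmap : Set.MapsTo (fun (r : X → X) => r ∘ q)
      (Set.range fun t' : T => fun x : X => t' • x) (envSemigroup T X) := by
    rintro r ⟨t', rfl⟩
    exact env_smul_comp t' hq
  have := map_mem_closure hc hp hmap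
  exact IsClosed.closure_subset isClosed_closure this

lemma env_nonempty : (envSemigroup T X).Nonempty :=
  ⟨fun x => (1 : T) • x, subset_closure ⟨1, rfl⟩⟩

/-- If `u` lies in a minimal left ideal `I` and `s ∈ I`, then `u = q ∘ s` for some `q ∈ E`. -/
lemma exists_comp_eq {I : Set (X → X)} (hI : IsMinimalLeftIdeal T I)
    {u s : X → X} (hu : u ∈ I) (hs : s ∈ I) :
    ∃ q ∈ envSemigroup T X, q ∘ s = u := by
  set L : Set (X → X) := (fun r => r ∘ s) '' envSemigroup T X with hL
  have hLideal : IsLeftIdeal T L := by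
    refine ⟨⟨_, Set.mem_image_of_mem _ env_nonempty.choose_spec⟩, ?_, ?_⟩
    · rintro r ⟨q, hq, rfl⟩
      exact env_comp hq (hI.1.2.1 hs)
    · rintro p hp r ⟨q, hq, rfl⟩
      exact ⟨p ∘ q, env_comp hp hq, (Function.comp_assoc p q s).symm⟩
  have hLsub : L ⊆ I := by
    rintro r ⟨q, hq, rfl⟩
    exact hI.1.2.2 q hq s hs
  have : L = I := hI.2 L hLideal hLsub
  rw [← this] at hu
  obtain ⟨q, hq, hqs⟩ := hu
  exact ⟨q, hq, hqs⟩

variable {Y : Type*} [TopologicalSpace Y] [T2Space Y]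

/-- Elements of the enveloping semigroup descend along equivariant continuous maps. -/
lemma env_pi_compat [MulAction T Y] (π : X → Y) (hπc : Continuous π)
    (hπe : ∀ (t : T) (x : X), π (t • x) = t • π x)
    {p : X → X} (hp : p ∈ envSemigroup T X) {x x' : X} (hxx' : π x = π x') :
    π (p x) = π (p x') := by
  have hclosed : IsClosed {r : X → X | π x = π x' → π (r x) = π (r x')} := by
    by_cases h : π x = π x'
    · have : {r : X → X | π x = π x' → π (r x) = π (r x')}
          = {r : X → X | π (r x) = π (r x')} := by
        ext r; simp [h]
      rw [this]
      exact isClosed_eq (hπc.comp (continuous_apply x)) (hπc.comp (continuous_apply x'))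
    · have : {r : X → X | π x = π x' → π (r x) = π (r x')} = Set.univ := by
        ext r; simp [h]
      rw [this]; exact isClosed_univ
  have hsub : Set.range (fun t : T => fun x : X => t • x)
      ⊆ {r : X → X | π x = π x' → π (r x) = π (r x')} := by
    rintro r ⟨t, rfl⟩ h
    simp only [hπe, h]
  exact closure_minimal hsub hclosed hp hxx'

/-- Minimality: the enveloping semigroup acts transitively. -/
lemma env_transitive [CompactSpace X] [T2Space X] (hX : IsMinimalFlow T X) (x₀ x₁ : X) :
    ∃ p ∈ envSemigroup T X, p x₀ = x₁ := by
  have hEcomp : IsCompact (envSemigroup T X) := isClosed_closure.isCompact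
  have him : IsCompact ((fun r : X → X => r x₀) '' envSemigroup T X) :=
    hEcomp.image (continuous_apply x₀)
  have hclosed : IsClosed ((fun r : X → X => r x₀) '' envSemigroup T X) := him.isClosed
  have horb : MulAction.orbit T x₀ ⊆ (fun r : X → X => r x₀) '' envSemigroup T X := by
    rintro z ⟨t, rfl⟩
    exact ⟨fun x => t • x, subset_closure ⟨t, rfl⟩, rfl⟩
  have : x₁ ∈ (fun r : X → X => r x₀) '' envSemigroup T X := by
    have := (hX x₀).closure_eq
    have hx : x₁ ∈ closure (MulAction.orbit T x₀) := by rw [this]; trivial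
    exact closure_minimal horb hclosed hx
  obtain ⟨p, hp, hpx⟩ := this
  exact ⟨p, hp, hpx⟩

/-- The key injection. -/
lemma key_le [CompactSpace X] [T2Space X] [MulAction T Y]
    (hX : IsMinimalFlow T X) (π : X → Y) (hπ : IsFactorMap T π)
    (y y' : Y) (u v : X → X)
    (hu : IsMinimalIdempotent T u) (hvE : v ∈ envSemigroup T X)
    (huy : Fixes π u y) (hvy' : Fixes π v y') :
    Cardinal.mk ↥(u '' (π ⁻¹' {y})) ≤ Cardinal.mk ↥(v '' (π ⁻¹' {y'})) := by
  obtain ⟨hπc, hπs, hπe⟩ := hπ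
  obtain ⟨x₀, hx₀⟩ := hπs y
  obtain ⟨x₁, hx₁⟩ := hπs y'
  obtain ⟨p, hpE, hpx⟩ := env_transitive hX x₀ x₁
  obtain ⟨huE, huu, I, hI, huI⟩ := hu
  -- p maps the fiber over y into the fiber over y'
  have hpfib : ∀ x : X, π x = y → π (p x) = y' := by
    intro x hx
    have := env_pi_compat π hπc hπe hpE (x := x) (x' := x₀) (by rw [hx, hx₀])
    rw [this, hpx, hx₁]
  -- s = v ∘ p ∘ u lies in I
  have hsI : (v ∘ p) ∘ u ∈ I := hI.1.2.2 (v ∘ p) (env_comp hvE hpE) u huI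
  obtain ⟨q, hqE, hqs⟩ := exists_comp_eq hI huI hsI
  -- the injection
  have hmaps : ∀ a ∈ u '' (π ⁻¹' {y}), v (p a) ∈ v '' (π ⁻¹' {y'}) := by
    rintro a ⟨x, hx, rfl⟩
    have hxy : π x = y := hx
    have h1 : π (u x) = y := huy x hxy
    have h2 : π (p (u x)) = y' := hpfib _ h1
    exact ⟨p (u x), h2, rfl⟩
  refine Cardinal.mk_le_of_injective (f := fun a : ↥(u '' (π ⁻¹' {y})) =>
    (⟨v (p a.1), hmaps a.1 a.2⟩ : ↥(v '' (π ⁻¹' {y'})))) ?_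
  rintro ⟨a, ha⟩ ⟨b, hb⟩ hab
  simp only [Subtype.mk.injEq] at hab ⊢
  obtain ⟨xa, hxa, rfl⟩ := ha
  obtain ⟨xb, hxb, rfl⟩ := hb
  have hqa : q (v (p (u xa))) = u xa := congrFun hqs xa
  have hqb : q (v (p (u xb))) = u xb := congrFun hqs xb
  rw [← hqa, ← hqb, hab]

end Aux

/-- Let `π : (X,T) → (Y,T)` be a factor map between minimal flows, `y, y' ∈ Y`,
`u` a minimal idempotent of `E(X,T)` fixing `y` and `v` a minimal idempotent fixing `y'`.
Then `u · π⁻¹(y)` and `v · π⁻¹(y')` have the same cardinality. -/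
theorem stmt0 {T : Type*} [Group T] [Countable T] [Infinite T]
    {X Y : Type*} [MetricSpace X] [CompactSpace X] [MulAction T X] [ContinuousConstSMul T X]
    [MetricSpace Y] [CompactSpace Y] [MulAction T Y] [ContinuousConstSMul T Y]
    (hX : IsMinimalFlow T X) (hY : IsMinimalFlow T Y)
    (π : X → Y) (hπ : IsFactorMap T π)
    (y y' : Y) (u v : X → X)
    (hu : IsMinimalIdempotent T u) (hv : IsMinimalIdempotent T v)
    (huy : Fixes π u y) (hvy' : Fixes π v y') :
    Cardinal.mk ↥(u '' (π ⁻¹' {y})) = Cardinal.mk ↥(v '' (π ⁻¹' {y'})) :=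
  le_antisymm
    (key_le hX π hπ y y' u v hu hv.1 huy hvy')
    (key_le hX π hπ y' y v u hv hu.1 hvy' huy)
end

section
/- Let π:(X,T)→(Y,T) be a factor map between minimal flows. Then π is almost proximal if and only if there is some n∈ℕ such that no finite subset A of a fiber of π with cardinality strictly greater than n is a minimal point of the hyperspace flow (2^X,T). Equivalently, with 2^X_{π,*} denoting the set of finite nonempty subsets of fibers of π and 2^X_{π,n} those of cardinality at most n, there are no minimal points of (2^X,T) in 2^X_{π,*}∖2^X_{π,n}. -/
/-- A proximal pair: the orbits of the two points come arbitrarily close. -/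
def IsProximalPair (T : Type*) {X : Type*} [Group T] [MetricSpace X] [MulAction T X]
    (x x' : X) : Prop :=
  ∀ ε : ℝ, 0 < ε → ∃ t : T, dist (t • x) (t • x') < ε

/-- A proximal extension: any two points in the same fiber are proximal. -/
def IsProximalExt (T : Type*) {X Y : Type*} [Group T] [MetricSpace X] [MulAction T X]
    (π : X → Y) : Prop :=
  ∀ x x' : X, π x = π x' → IsProximalPair T x x'

/-- A minimal (almost periodic) point: its orbit closure is a minimal subflow. -/
def IsMinimalPoint (T : Type*) {Z : Type*} [Group T] [TopologicalSpace Z] [MulAction T Z]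
    (z : Z) : Prop :=
  ∀ w ∈ closure (MulAction.orbit T z), z ∈ closure (MulAction.orbit T w)

/-- An almost periodic set: every tuple of finitely many distinct points of `A` is a
minimal point of the corresponding product flow. -/
def IsAlmostPeriodicSet (T : Type*) {X : Type*} [Group T] [TopologicalSpace X] [MulAction T X]
    (A : Set X) : Prop :=
  ∀ (n : ℕ) (f : Fin n → X), Function.Injective f → (∀ i, f i ∈ A) →
    IsMinimalPoint T f

/-- An almost proximal extension: there is `N` bounding the cardinality of every almost
periodic subset of every fiber. -/
def IsAlmostProximalExt (T : Type*) {X Y : Type*} [Group T] [TopologicalSpace X] [MulAction T X]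
    (π : X → Y) : Prop :=
  ∃ N : ℕ, ∀ (y : Y) (A : Set X), A ⊆ π ⁻¹' {y} → IsAlmostPeriodicSet T A →
    Cardinal.mk ↥A ≤ (N : Cardinal)

/-- An almost one to one extension: a dense `Gδ` set of points which are alone in their fiber. -/
def IsAlmostOneToOneExt {X Y : Type*} [TopologicalSpace X] (π : X → Y) : Prop :=
  ∃ X₀ : Set X, Dense X₀ ∧ IsGδ X₀ ∧ ∀ x ∈ X₀, π ⁻¹' {π x} = {x}

/-- An almost finite to one extension: some fiber is finite. -/
def IsAlmostFiniteToOneExt {X Y : Type*} (π : X → Y) : Prop :=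
  ∃ y : Y, (π ⁻¹' {y}).Finite

/-- An equicontinuous (isometric) extension. -/
def IsEquicontinuousExt (T : Type*) {X Y : Type*} [Group T] [MetricSpace X] [MulAction T X]
    (π : X → Y) : Prop :=
  ∀ ε : ℝ, 0 < ε → ∃ δ : ℝ, 0 < δ ∧ ∀ x₁ x₂ : X, π x₁ = π x₂ → dist x₁ x₂ < δ →
    ∀ t : T, dist (t • x₁) (t • x₂) < ε

/-- A distal extension: distinct points in the same fiber are never proximal. -/
def IsDistalExt (T : Type*) {X Y : Type*} [Group T] [MetricSpace X] [MulAction T X]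
    (π : X → Y) : Prop :=
  ∀ x₁ x₂ : X, π x₁ = π x₂ → x₁ ≠ x₂ → ¬ IsProximalPair T x₁ x₂

/-- A point distal extension: some point is proximal to no other point of its fiber. -/
def IsPointDistalExt (T : Type*) {X Y : Type*} [Group T] [MetricSpace X] [MulAction T X]
    (π : X → Y) : Prop :=
  ∃ x : X, ∀ x' : X, π x' = π x → x' ≠ x → ¬ IsProximalPair T x x'

/-- A recurrent point of a flow. -/
def IsRecurrentPoint (T : Type*) {Z : Type*} [Group T] [TopologicalSpace Z] [MulAction T Z]
    (z : Z) : Prop :=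
  ∀ U ∈ nhds z, {t : T | t • z ∈ U}.Infinite

/-- A strong Li-Yorke pair: proximal and recurrent in the product flow. -/
def IsStrongLiYorkePair (T : Type*) {X : Type*} [Group T] [MetricSpace X] [MulAction T X]
    (x x' : X) : Prop :=
  IsProximalPair T x x' ∧ IsRecurrentPoint T ((x, x') : X × X)

/-- A strongly scrambled set: every pair of distinct points is a strong Li-Yorke pair. -/
def IsStronglyScrambled (T : Type*) {X : Type*} [Group T] [MetricSpace X] [MulAction T X]
    (S : Set X) : Prop :=
  ∀ x ∈ S, ∀ x' ∈ S, x ≠ x' → IsStrongLiYorkePair T x x'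

open TopologicalSpace

/-- The action of `t : T` on the hyperspace of nonempty compact subsets of `X`. -/
def ncSMul (T : Type*) {X : Type*} [Group T] [MetricSpace X] [MulAction T X]
    [ContinuousConstSMul T X] (t : T) (A : NonemptyCompacts X) : NonemptyCompacts X :=
  ⟨⟨(t • ·) '' (A : Set X), A.isCompact.image (continuous_const_smul t)⟩,
    A.nonempty.image _⟩

/-- The orbit of a point of the hyperspace flow `(2^X, T)`. -/
def ncOrbit (T : Type*) {X : Type*} [Group T] [MetricSpace X] [MulAction T X]
    [ContinuousConstSMul T X] (A : NonemptyCompacts X) : Set (NonemptyCompacts X) :=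
  Set.range fun t : T => ncSMul T t A

/-- A minimal point of the hyperspace flow `(2^X, T)` (with the Hausdorff metric topology). -/
def IsMinimalPointNC (T : Type*) {X : Type*} [Group T] [MetricSpace X] [MulAction T X]
    [ContinuousConstSMul T X] (A : NonemptyCompacts X) : Prop :=
  ∀ B ∈ closure (ncOrbit T A), A ∈ closure (ncOrbit T B)

section AuxStmt3

open MulAction Set Metric

variable {T : Type*} [Group T]

/-- Pushforward of closure-of-orbit membership under a continuous equivariant map. -/
lemma aux_push_mem {Z W : Type*} [TopologicalSpace Z] [TopologicalSpace W]
    [MulAction T Z] [MulAction T W] (F : Z → W) (hF : Continuous F)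
    (hEq : ∀ (t : T) (z : Z), F (t • z) = t • F z) {g h : Z}
    (hg : g ∈ closure (MulAction.orbit T h)) :
    F g ∈ closure (MulAction.orbit T (F h)) := by
  have h1 : F '' (MulAction.orbit T h) = MulAction.orbit T (F h) := by
    ext w
    constructor
    · rintro ⟨-, ⟨t, rfl⟩, rfl⟩
      exact ⟨t, (hEq t h).symm⟩
    · rintro ⟨t, rfl⟩
      exact ⟨t • h, ⟨t, rfl⟩, hEq t h⟩
  have h2 : F g ∈ closure (F '' MulAction.orbit T h) :=
    image_closure_subset_closure_image hF (Set.mem_image_of_mem F hg)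
  rwa [h1] at h2

lemma aux_smul_mem_closure_orbit {Z : Type*} [TopologicalSpace Z] [MulAction T Z]
    [ContinuousConstSMul T Z] (t : T) {g h : Z}
    (hg : g ∈ closure (MulAction.orbit T h)) :
    t • g ∈ closure (MulAction.orbit T h) := by
  have h1 : (t • ·) '' (MulAction.orbit T h) = MulAction.orbit T h := by
    simpa [← Set.image_smul] using MulAction.smul_orbit t h
  have h2 : t • g ∈ closure ((t • ·) '' MulAction.orbit T h) :=
    image_closure_subset_closure_image (continuous_const_smul t)
      (Set.mem_image_of_mem _ hg)
  rwa [h1] at h2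

lemma aux_trans {Z : Type*} [TopologicalSpace Z] [MulAction T Z]
    [ContinuousConstSMul T Z] {g h x : Z}
    (hx : x ∈ closure (MulAction.orbit T g)) (hg : g ∈ closure (MulAction.orbit T h)) :
    x ∈ closure (MulAction.orbit T h) := by
  have : closure (MulAction.orbit T g) ⊆ closure (MulAction.orbit T h) := by
    apply closure_minimal _ isClosed_closure
    rintro - ⟨t, rfl⟩
    exact aux_smul_mem_closure_orbit t hg
  exact this hx

/-- A point whose image under every equivariant continuous map from a compact space
is still a minimal point. -/
lemma aux_min_push {Z W : Type*} [TopologicalSpace Z] [TopologicalSpace W] [T2Space W]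
    [CompactSpace Z] [MulAction T Z] [MulAction T W] (F : Z → W) (hF : Continuous F)
    (hEq : ∀ (t : T) (z : Z), F (t • z) = t • F z) {z : Z}
    (hz : IsMinimalPoint T z) : IsMinimalPoint T (F z) := by
  intro w hw
  have hcl : closure (MulAction.orbit T (F z)) ⊆ F '' closure (MulAction.orbit T z) := by
    apply closure_minimal
    · rintro - ⟨t, rfl⟩
      exact ⟨t • z, subset_closure ⟨t, rfl⟩, hEq t z⟩
    · exact (isClosed_closure.isCompact.image hF).isClosed
  obtain ⟨u, hu, rfl⟩ := hcl hw
  exact aux_push_mem F hF hEq (hz u hu)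

variable {X : Type*} [MetricSpace X] [MulAction T X] [ContinuousConstSMul T X]

noncomputable instance aux_ncMulAction : MulAction T (NonemptyCompacts X) where
  smul t A := ncSMul T t A
  one_smul A := by
    apply NonemptyCompacts.ext
    show ((1 : T) • ·) '' (A : Set X) = A
    simp
  mul_smul t s A := by
    apply NonemptyCompacts.ext
    show ((t * s) • ·) '' (A : Set X) = (t • ·) '' ((s • ·) '' (A : Set X))
    rw [Set.image_image]
    simp [mul_smul]

lemma aux_ncOrbit_eq (A : NonemptyCompacts X) : ncOrbit T A = MulAction.orbit T A := rfl

lemma aux_isMinimalPointNC_iff (A : NonemptyCompacts X) :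
    IsMinimalPointNC T A ↔ IsMinimalPoint T A := Iff.rfl

/-- The finite set of values of a tuple, as a nonempty compact subset. -/
def auxFrange {X : Type*} [MetricSpace X] {k : ℕ} [NeZero k] (f : Fin k → X) :
    NonemptyCompacts X :=
  ⟨⟨Set.range f, (Set.finite_range f).isCompact⟩, Set.range_nonempty f⟩

lemma auxFrange_coe {k : ℕ} [NeZero k] (f : Fin k → X) :
    (auxFrange f : Set X) = Set.range f := rfl

lemma auxFrange_lipschitz {k : ℕ} [NeZero k] :
    LipschitzWith 1 (auxFrange : (Fin k → X) → NonemptyCompacts X) := by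
  apply LipschitzWith.of_edist_le
  intro g g'
  show EMetric.hausdorffEdist (Set.range g) (Set.range g') ≤ edist g g'
  apply EMetric.hausdorffEdist_le_of_mem_edist
  · rintro - ⟨i, rfl⟩
    exact ⟨g' i, ⟨i, rfl⟩, edist_le_pi_edist g g' i⟩
  · rintro - ⟨i, rfl⟩
    exact ⟨g i, ⟨i, rfl⟩, by simpa [edist_comm] using edist_le_pi_edist g g' i⟩

lemma auxFrange_equivariant {k : ℕ} [NeZero k] (t : T) (g : Fin k → X) :
    auxFrange (t • g) = t • auxFrange g := by
  apply NonemptyCompacts.ext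
  show Set.range (t • g) = (t • ·) '' Set.range g
  rw [← Set.range_comp]
  rfl

lemma aux_tuple_min_to_set [CompactSpace X] {k : ℕ} [NeZero k] {f : Fin k → X}
    (hf : IsMinimalPoint T f) : IsMinimalPointNC T (auxFrange f) :=
  (aux_isMinimalPointNC_iff _).2 <|
    aux_min_push auxFrange auxFrange_lipschitz.continuous auxFrange_equivariant hf

lemma aux_exists_sep {k : ℕ} {f : Fin k → X} (hf : Function.Injective f) :
    ∃ δ : ℝ, 0 < δ ∧ ∀ i j : Fin k, dist (f i) (f j) < δ → i = j := by
  classical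
  by_cases hk : ∀ i j : Fin k, i = j
  · exact ⟨1, one_pos, fun i j _ => hk i j⟩
  · push_neg at hk
    obtain ⟨i0, j0, hij0⟩ := hk
    have hp0 : ((i0, j0) : Fin k × Fin k) ∈ Finset.univ.offDiag :=
      Finset.mem_offDiag.2 ⟨Finset.mem_univ _, Finset.mem_univ _, hij0⟩
    have hne : ((Finset.univ.offDiag).image
        (fun p : Fin k × Fin k => dist (f p.1) (f p.2))).Nonempty :=
      ⟨dist (f i0) (f j0), Finset.mem_image_of_mem _ hp0⟩
    refine ⟨Finset.min' _ hne, ?_, ?_⟩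
    · have hmem := Finset.min'_mem _ hne
      simp only [Finset.mem_image, Finset.mem_offDiag] at hmem
      obtain ⟨⟨i, j⟩, ⟨-, -, hij⟩, hd⟩ := hmem
      rw [← hd]
      exact dist_pos.2 fun h => hij (hf h)
    · intro i j hlt
      by_contra hij
      have hmem : dist (f i) (f j) ∈ (Finset.univ.offDiag).image
          (fun p : Fin k × Fin k => dist (f p.1) (f p.2)) :=
        Finset.mem_image.2 ⟨(i, j),
          Finset.mem_offDiag.2 ⟨Finset.mem_univ _, Finset.mem_univ _, hij⟩, rfl⟩
      exact absurd (Finset.min'_le _ _ hmem) (not_le.2 hlt)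

lemma aux_comp_continuous {k m : ℕ} (ι : Fin m → Fin k) :
    Continuous (fun h : Fin k → X => h ∘ ι) :=
  continuous_pi fun i => continuous_apply (ι i)

lemma aux_comp_equivariant {k m : ℕ} (ι : Fin m → Fin k) (t : T) (h : Fin k → X) :
    (t • h) ∘ ι = t • (h ∘ ι) := rfl

/-- The key converse: a finite minimal point of the hyperspace flow enumerated by an
injective tuple gives a minimal point of the product flow. -/
lemma aux_set_min_to_tuple [CompactSpace X] {k : ℕ} [NeZero k] {f : Fin k → X}
    (hf : Function.Injective f) (hmin : IsMinimalPointNC T (auxFrange f)) :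
    IsMinimalPoint T f := by
  intro w hw
  -- the set of values of `w` lies in the orbit closure of the set of values of `f`
  have hB : auxFrange w ∈ closure (MulAction.orbit T (auxFrange f)) :=
    aux_push_mem auxFrange auxFrange_lipschitz.continuous auxFrange_equivariant hw
  have hA : auxFrange f ∈ closure (MulAction.orbit T (auxFrange w)) := by
    have := hmin (auxFrange w) (by rwa [aux_ncOrbit_eq])
    rwa [aux_ncOrbit_eq] at this
  obtain ⟨δ, hδpos, hδ⟩ := aux_exists_sep hf
  -- for each n, find t and an index map approximating f by a translate of w
  have key : ∀ n : ℕ, ∃ (t : T) (σ : Fin k → Fin k),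
      ∀ i, dist (f i) (t • w (σ i)) < min (δ / 3) (1 / (n + 1)) := by
    intro n
    have hε : (0 : ℝ) < min (δ / 3) (1 / (n + 1)) := by positivity
    obtain ⟨b, hb, hdist⟩ := Metric.mem_closure_iff.1 hA _ hε
    obtain ⟨t, rfl⟩ := hb
    have hdist' : Metric.hausdorffDist (Set.range f) ((t • ·) '' Set.range w)
        < min (δ / 3) (1 / (n + 1)) := by
      rw [NonemptyCompacts.dist_eq] at hdist
      exact hdist
    have hfin : EMetric.hausdorffEdist (Set.range f) ((t • ·) '' Set.range w) ≠ ⊤ := by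
      apply Metric.hausdorffEdist_ne_top_of_nonempty_of_bounded
      · exact Set.range_nonempty f
      · exact (Set.range_nonempty w).image _
      · exact ((Set.finite_range f).isCompact).isBounded
      · exact (((Set.finite_range w).isCompact).image (continuous_const_smul t)).isBounded
    have hpt : ∀ i : Fin k, ∃ j : Fin k, dist (f i) (t • w j) < min (δ / 3) (1 / (n + 1)) := by
      intro i
      obtain ⟨y, hy, hyd⟩ :=
        Metric.exists_dist_lt_of_hausdorffDist_lt (Set.mem_range_self i) hdist' hfin
      obtain ⟨-, ⟨j, rfl⟩, rfl⟩ := hy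
      exact ⟨j, hyd⟩
    choose σ hσ using hpt
    exact ⟨t, σ, hσ⟩
  choose t σ hσ using key
  -- pick an index map occurring infinitely often
  obtain ⟨s, hs⟩ := Finite.exists_infinite_fiber σ
  have hsinf : (σ ⁻¹' {s}).Infinite := Set.infinite_coe_iff.1 hs
  -- s is injective, hence a permutation
  have hsinj : Function.Injective s := by
    obtain ⟨n, hn⟩ := hsinf.nonempty
    intro i j hij
    apply hδ
    have h1 := hσ n i
    have h2 := hσ n j
    rw [Set.mem_preimage, Set.mem_singleton_iff] at hn
    rw [hn] at h1 h2
    rw [hij] at h1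
    calc dist (f i) (f j) ≤ dist (f i) (t n • w (s j)) + dist (t n • w (s j)) (f j) :=
          dist_triangle _ _ _
      _ < min (δ / 3) (1 / (n + 1)) + min (δ / 3) (1 / (n + 1)) := by
          rw [dist_comm (t n • w (s j))]
          exact add_lt_add h1 h2
      _ ≤ δ / 3 + δ / 3 := add_le_add (min_le_left _ _) (min_le_left _ _)
      _ < δ := by linarith
  -- f lies in the orbit closure of w ∘ s
  have hfw : f ∈ closure (MulAction.orbit T (w ∘ s)) := by
    rw [Metric.mem_closure_iff]
    intro ε hε
    obtain ⟨N, hN⟩ := exists_nat_one_div_lt hε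
    obtain ⟨n, hn, hNn⟩ := hsinf.exists_gt N
    rw [Set.mem_preimage, Set.mem_singleton_iff] at hn
    refine ⟨t n • (w ∘ s), ⟨t n, rfl⟩, ?_⟩
    rw [dist_pi_lt_iff hε]
    intro i
    have h1 := hσ n i
    rw [hn] at h1
    have h2 : min (δ / 3) (1 / ((n : ℝ) + 1)) ≤ 1 / ((n : ℝ) + 1) := min_le_right _ _
    have h3 : (1 : ℝ) / ((n : ℝ) + 1) ≤ 1 / ((N : ℝ) + 1) := by
      apply one_div_le_one_div_of_le
      · positivity
      · have : (N : ℝ) ≤ (n : ℝ) := Nat.cast_le.2 hNn.le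
        linarith
    calc dist (f i) ((t n • (w ∘ s)) i) = dist (f i) (t n • w (s i)) := rfl
      _ < min (δ / 3) (1 / (n + 1)) := h1
      _ ≤ 1 / ((N : ℝ) + 1) := le_trans h2 h3
      _ < ε := hN
  -- upgrade to a permutation and iterate
  have hsbij : Function.Bijective s := Finite.injective_iff_bijective.1 hsinj
  let e : Equiv.Perm (Fin k) := Equiv.ofBijective s hsbij
  have hfe : f ∈ closure (MulAction.orbit T (w ∘ ⇑e)) := hfw
  have hchain : ∀ j : ℕ, f ∈ closure (MulAction.orbit T (w ∘ ⇑(e ^ (j + 1)))) := by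
    intro j
    induction j with
    | zero => simpa using hfe
    | succ j ih =>
      -- w ∘ e^{j+1} ∈ cl orb (f ∘ e^{j+1})
      have hw1 : w ∘ ⇑(e ^ (j + 1)) ∈ closure (MulAction.orbit T (f ∘ ⇑(e ^ (j + 1)))) :=
        aux_push_mem _ (aux_comp_continuous _) (aux_comp_equivariant _) hw
      -- f ∘ e^{j+1} ∈ cl orb (w ∘ e ∘ e^{j+1}) = cl orb (w ∘ e^{j+2})
      have hw2 : f ∘ ⇑(e ^ (j + 1)) ∈
          closure (MulAction.orbit T ((w ∘ ⇑e) ∘ ⇑(e ^ (j + 1)))) :=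
        aux_push_mem _ (aux_comp_continuous _) (aux_comp_equivariant _) hfe
      have hcomp : (w ∘ ⇑e) ∘ ⇑(e ^ (j + 1)) = w ∘ ⇑(e ^ (j + 2)) := by
        have : e ^ (j + 2) = e * e ^ (j + 1) := by
          rw [← pow_succ']
        rw [this, Equiv.Perm.coe_mul]
        rfl
      rw [hcomp] at hw2
      exact aux_trans (aux_trans ih hw1) hw2
  have hord : orderOf e ≠ 0 := (orderOf_pos e).ne'
  obtain ⟨j, hj⟩ : ∃ j : ℕ, orderOf e = j + 1 := ⟨orderOf e - 1, (Nat.succ_pred_eq_of_pos (orderOf_pos e)).symm⟩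
  have := hchain j
  rw [← hj, pow_orderOf_eq_one e] at this
  simpa using this

end AuxStmt3

/-- An extension of minimal flows is almost proximal iff for some `n` no
finite subset of a fiber of cardinality exceeding `n` is a minimal point of the hyperspace
flow `(2^X, T)`. -/
theorem stmt3 {T : Type*} [Group T] [Countable T] [Infinite T]
    {X Y : Type*} [MetricSpace X] [CompactSpace X] [MulAction T X] [ContinuousConstSMul T X]
    [MetricSpace Y] [CompactSpace Y] [MulAction T Y] [ContinuousConstSMul T Y]
    (hX : IsMinimalFlow T X) (hY : IsMinimalFlow T Y)
    (π : X → Y) (hπ : IsFactorMap T π) :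
    IsAlmostProximalExt T π ↔
      ∃ n : ℕ, ∀ (y : Y) (A : Set X) (hA : A.Finite) (hne : A.Nonempty),
        A ⊆ π ⁻¹' {y} → n < Nat.card ↥A →
        ¬ IsMinimalPointNC T ⟨⟨A, hA.isCompact⟩, hne⟩ := by
  classical
  constructor
  · -- almost proximal ⇒ bound on minimal points
    rintro ⟨N, hN⟩
    refine ⟨N, ?_⟩
    intro y A hA hne hsub hcard hmin
    -- enumerate A
    set s : Finset X := hA.toFinset with hsdef
    have hscoe : (s : Set X) = A := hA.coe_toFinset
    have hspos : 0 < s.card := by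
      obtain ⟨x, hx⟩ := hne
      exact Finset.card_pos.2 ⟨x, hA.mem_toFinset.2 hx⟩
    haveI : NeZero s.card := ⟨hspos.ne'⟩
    let e := s.equivFin
    let f : Fin s.card → X := fun i => ((e.symm i : s) : X)
    have hfinj : Function.Injective f := by
      intro i j hij
      have := Subtype.ext (p := fun x => x ∈ s) hij
      exact e.symm.injective this
    have hrange : Set.range f = A := by
      rw [← hscoe]
      ext x
      constructor
      · rintro ⟨i, rfl⟩
        exact (e.symm i).2
      · intro hx
        exact ⟨e ⟨x, hx⟩, by simp [f]⟩
    have hfr : auxFrange f = (⟨⟨A, hA.isCompact⟩, hne⟩ : TopologicalSpace.NonemptyCompacts X) :=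
      TopologicalSpace.NonemptyCompacts.ext hrange
    have hmin' : IsMinimalPointNC T (auxFrange f) := by rwa [hfr]
    have hfmin : IsMinimalPoint T f := aux_set_min_to_tuple hfinj hmin'
    -- A is an almost periodic set
    have hap : IsAlmostPeriodicSet T A := by
      intro m g hginj hgmem
      rcases Nat.eq_zero_or_pos m with rfl | hm
      · intro v hv
        have : v = g := funext fun i => i.elim0
        subst this
        exact subset_closure ⟨1, one_smul _ _⟩
      · have hmem' : ∀ i, g i ∈ s := fun i => by
          rw [← hscoe] at hgmem; exact hgmem i
        let ι : Fin m → Fin s.card := fun i => e ⟨g i, hmem' i⟩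
        have hgf : g = f ∘ ι := funext fun i => by simp [f, ι]
        rw [hgf]
        exact aux_min_push (fun h => h ∘ ι) (aux_comp_continuous ι)
          (aux_comp_equivariant ι) hfmin
    have hle := hN y A hsub hap
    haveI : Finite ↥A := hA
    have hcast : ((Nat.card ↥A : ℕ) : Cardinal) = Cardinal.mk ↥A := by
      rw [Nat.card]
      exact Cardinal.cast_toNat_of_lt_aleph0 (Cardinal.lt_aleph0_of_finite _)
    have : (N : Cardinal) < Cardinal.mk ↥A := by
      rw [← hcast]
      exact_mod_cast hcard
    exact absurd hle (not_le.2 this)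
  · -- bound on minimal points ⇒ almost proximal
    rintro ⟨n, hn⟩
    refine ⟨n, ?_⟩
    intro y A hsub hap
    by_contra hlt
    have h1 : (n : Cardinal) < Cardinal.mk ↥A := not_le.1 hlt
    have hemb : ∃ _ : Fin (n + 1) ↪ ↥A, True := by
      rcases Set.finite_or_infinite A with hfin | hinf
      · haveI : Finite ↥A := hfin
        have hcast : ((Nat.card ↥A : ℕ) : Cardinal) = Cardinal.mk ↥A := by
          rw [Nat.card]
          exact Cardinal.cast_toNat_of_lt_aleph0 (Cardinal.lt_aleph0_of_finite _)
        have hcard : n < Nat.card ↥A := by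
          by_contra hc
          push_neg at hc
          apply hlt
          rw [← hcast]
          exact_mod_cast hc
        exact ⟨(Fin.castLEEmb (by omega : n + 1 ≤ Nat.card ↥A)).trans
          (Finite.equivFin ↥A).symm.toEmbedding, trivial⟩
      · exact ⟨(Fin.valEmbedding).trans hinf.natEmbedding, trivial⟩
    obtain ⟨emb, -⟩ := hemb
    let g : Fin (n + 1) → X := fun i => (emb i : X)
    have hginj : Function.Injective g := fun i j hij => emb.injective (Subtype.ext hij)
    have hgmem : ∀ i, g i ∈ A := fun i => (emb i).2
    have hgmin : IsMinimalPoint T g := hap (n + 1) g hginj hgmem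
    haveI : NeZero (n + 1) := ⟨Nat.succ_ne_zero n⟩
    have hncmin : IsMinimalPointNC T (auxFrange g) := aux_tuple_min_to_set hgmin
    have hfin : (Set.range g).Finite := Set.finite_range g
    have hne : (Set.range g).Nonempty := Set.range_nonempty g
    have hsub' : Set.range g ⊆ π ⁻¹' {y} := by
      rintro - ⟨i, rfl⟩
      exact hsub (hgmem i)
    have hcard : n < Nat.card ↥(Set.range g) := by
      rw [Nat.card_range_of_injective hginj]
      simp
    exact hn y (Set.range g) hfin hne hsub' hcard hncmin
end

section
/- Let π:(X,T)→(Y,T) be a factor map between minimal flows. If π is a proximal extension but not an almost one to one extension, then every fiber π^{-1}(y) is infinite; in particular π is not almost finite to one. -/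
section AuxStmt4

open Filter Topology

variable {T : Type*} [Group T] {X Y : Type*}
  [MetricSpace X] [CompactSpace X] [MulAction T X] [ContinuousConstSMul T X]
  [MetricSpace Y] [MulAction T Y]

/-- Collapse lemma: finitely many points in a common fiber of a proximal extension can be
simultaneously brought within `ε` of each other. -/
lemma aux_collapse_stmt4 (π : X → Y) (hc : Continuous π)
    (heq : ∀ (t : T) (x : X), π (t • x) = t • π x)
    (hprox : IsProximalExt T π) :
    ∀ (n : ℕ) (x : Fin n → X), (∀ i j, π (x i) = π (x j)) →
      ∀ ε : ℝ, 0 < ε → ∃ t : T, ∀ i j, dist (t • x i) (t • x j) < ε := by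
  intro n
  induction n with
  | zero => exact fun x _ ε hε => ⟨1, fun i => i.elim0⟩
  | succ n ih =>
    intro x hx ε hε
    have hp : IsProximalPair T (x (Fin.last n)) (x 0) := hprox _ _ (hx _ _)
    choose s hs using fun k : ℕ => hp (1 / (k + 1)) (by positivity)
    set u : ℕ → (Fin (n + 1) → X) := fun k i => s k • x i with hu
    obtain ⟨w, -, φ, hφ, hw⟩ := IsCompact.tendsto_subseq
      (s := (Set.univ : Set (Fin (n + 1) → X))) isCompact_univ
      (x := u) (fun k => Set.mem_univ _)
    have hwc : ∀ i, Tendsto (fun k => u (φ k) i) atTop (𝓝 (w i)) := by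
      intro i
      have := tendsto_pi_nhds.mp hw i
      simpa using this
    -- the last and first coordinates of the limit coincide
    have hlast0 : w (Fin.last n) = w 0 := by
      have h1 : Tendsto (fun k => dist (u (φ k) (Fin.last n)) (u (φ k) 0)) atTop
          (𝓝 (dist (w (Fin.last n)) (w 0))) := (hwc _).dist (hwc 0)
      have h2 : Tendsto (fun k => dist (u (φ k) (Fin.last n)) (u (φ k) 0)) atTop (𝓝 0) := by
        apply squeeze_zero (fun k => dist_nonneg) (g := fun k : ℕ => 1 / (k + 1 : ℝ))
        · intro k
          have hb : dist (u (φ k) (Fin.last n)) (u (φ k) 0) < 1 / (φ k + 1 : ℝ) := hs (φ k)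
          have hmono : (1 : ℝ) / (φ k + 1) ≤ 1 / (k + 1) := by
            apply one_div_le_one_div_of_le (by positivity)
            have hk : k ≤ φ k := hφ.le_apply
            have : (k : ℝ) ≤ (φ k : ℝ) := Nat.cast_le.mpr hk
            linarith
          linarith
        · exact tendsto_one_div_add_atTop_nhds_zero_nat
      have := tendsto_nhds_unique h1 h2
      exact dist_eq_zero.mp this
    -- the limit points lie in a  common fiber
    have hwfib : ∀ i j, π (w i) = π (w j) := by
      intro i j
      have hi : Tendsto (fun k => π (u (φ k) i)) atTop (𝓝 (π (w i))) :=
        (hc.tendsto _).comp (hwc i)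
      have hj : Tendsto (fun k => π (u (φ k) j)) atTop (𝓝 (π (w j))) :=
        (hc.tendsto _).comp (hwc j)
      have hij : (fun k => π (u (φ k) i)) = fun k => π (u (φ k) j) := by
        funext k
        simp only [hu]
        rw [heq, heq, hx i j]
      rw [hij] at hi
      exact tendsto_nhds_unique hi hj
    rcases Nat.eq_zero_or_pos n with hn | hn
    · subst hn
      refine ⟨1, fun i j => ?_⟩
      have hij : i = j := by ext; omega
      rw [hij]
      simpa using hε
    -- apply the inductive hypothesis to the first `n` coordinates of `w`
    obtain ⟨r, hr⟩ := ih (fun i' => w (Fin.castSucc i')) (fun i j => hwfib _ _)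
      (ε / 3) (by positivity)
    have hw0 : ∀ i : Fin (n + 1), ∃ i' : Fin n, w i = w (Fin.castSucc i') := by
      intro i
      by_cases hi : (i : ℕ) < n
      · refine ⟨⟨i, hi⟩, ?_⟩
        have : Fin.castSucc (⟨i, hi⟩ : Fin n) = i := by ext; simp
        rw [this]
      · refine ⟨⟨0, hn⟩, ?_⟩
        have hilast : i = Fin.last n := by
          ext
          have := i.isLt
          simp only [Fin.val_last]
          omega
        have h0 : Fin.castSucc (⟨0, hn⟩ : Fin n) = (0 : Fin (n + 1)) := by ext; simp
        rw [hilast, hlast0, h0]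
    have hrc : ∀ i, Tendsto (fun k => r • u (φ k) i) atTop (𝓝 (r • w i)) :=
      fun i => (hwc i).const_smul r
    choose N hN using fun i => Metric.tendsto_atTop.mp (hrc i) (ε / 3) (by positivity)
    set K := Finset.univ.sup N with hK
    have hKi : ∀ i, dist (r • u (φ K) i) (r • w i) < ε / 3 :=
      fun i => hN i K (Finset.le_sup (Finset.mem_univ i))
    refine ⟨r * s (φ K), fun i j => ?_⟩
    obtain ⟨i', hi'⟩ := hw0 i
    obtain ⟨j', hj'⟩ := hw0 j
    have hmid : dist (r • w i) (r • w j) < ε / 3 := by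
      rw [hi', hj']; exact hr i' j'
    have hrw : dist ((r * s (φ K)) • x i) ((r * s (φ K)) • x j)
        = dist (r • u (φ K) i) (r • u (φ K) j) := by
      simp only [hu, mul_smul]
    rw [hrw]
    have htri : dist (r • u (φ K) i) (r • u (φ K) j)
        ≤ dist (r • u (φ K) i) (r • w i) + dist (r • w i) (r • w j)
          + dist (r • w j) (r • u (φ K) j) := dist_triangle4 _ _ _ _
    have hj3 : dist (r • w j) (r • u (φ K) j) < ε / 3 := by
      rw [dist_comm]; exact hKi j
    linarith [hKi i]

/-- If a proximal extension of minimal flows has a finite fiber,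
then it is almost one to one. -/
lemma aux_a11_stmt4 [CompactSpace Y] [ContinuousConstSMul T Y]
    (hX : IsMinimalFlow T X) (hY : IsMinimalFlow T Y)
    (π : X → Y) (hπ : IsFactorMap T π) (hprox : IsProximalExt T π)
    (hfin : ∃ y : Y, (π ⁻¹' {y}).Finite) : IsAlmostOneToOneExt π := by
  classical
  obtain ⟨hc, hsurj, heq⟩ := hπ
  by_cases hne : Nonempty X
  swap
  · refine ⟨Set.univ, dense_univ, IsGδ.univ, fun x _ => ?_⟩
    exact absurd ⟨x⟩ hne
  obtain ⟨y₀, hF⟩ := hfin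
  have hYne : Nonempty Y := hne.map π
  set D : ℝ → Set Y := fun r => {y | ∃ p : X, π ⁻¹' {y} ⊆ Metric.ball p r} with hD
  have hfib_smul : ∀ (t : T) (y : Y) (a : X), π a = t • y ↔ π (t⁻¹ • a) = y := by
    intro t y a
    rw [heq]
    constructor
    · intro h; rw [h, inv_smul_smul]
    · intro h; rwa [inv_smul_eq_iff] at h
  -- each D r is open
  have hDopen : ∀ r : ℝ, IsOpen (D r) := by
    intro r
    have hEq : D r = ⋃ p : X, (π '' (Metric.ball p r)ᶜ)ᶜ := by
      ext y
      simp only [hD, Set.mem_setOf_eq, Set.mem_iUnion, Set.mem_compl_iff, Set.mem_image,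
        not_exists]
      constructor
      · rintro ⟨p, hp⟩
        exact ⟨p, fun a hcon => hcon.1 (hp (by simp [hcon.2]))⟩
      · rintro ⟨p, hp⟩
        refine ⟨p, fun a (ha : π a = y) => ?_⟩
        by_contra hab
        exact hp a ⟨hab, ha⟩
    rw [hEq]
    exact isOpen_iUnion fun p =>
      (hc.isClosedMap _ (Metric.isOpen_ball).isClosed_compl).isOpen_compl
  -- each D r with positive r is dense
  have hDdense : ∀ r : ℝ, 0 < r → Dense (D r) := by
    intro r hr
    rw [dense_iff_inter_open]
    intro V hV hVne
    have hcover : (Set.univ : Set Y) ⊆ ⋃ t : T, (fun y => t • y) ⁻¹' V := by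
      intro y _
      obtain ⟨z, hzOrb, hzV⟩ := (hY y).exists_mem_open hV hVne
      obtain ⟨t, ht⟩ := MulAction.mem_orbit_iff.mp hzOrb
      exact Set.mem_iUnion.mpr ⟨t, by simp [ht, hzV]⟩
    obtain ⟨S, hS⟩ := isCompact_univ.elim_finite_subcover
      (fun t : T => (fun y => t • y) ⁻¹' V)
      (fun t => hV.preimage (continuous_const_smul t)) hcover
    have hSne : S.Nonempty := by
      obtain ⟨y⟩ := hYne
      obtain ⟨t, htS, -⟩ := Set.mem_iUnion₂.mp (hS (Set.mem_univ y))
      exact ⟨t, htS⟩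
    have hδ : ∀ t : T, ∃ δ : ℝ, 0 < δ ∧ ∀ a b : X, dist a b < δ → dist (t • a) (t • b) < r := by
      intro t
      have hu := CompactSpace.uniformContinuous_of_continuous
        (continuous_const_smul t : Continuous fun x : X => t • x)
      obtain ⟨δ, hδ0, hδ'⟩ := Metric.uniformContinuous_iff.mp hu r hr
      exact ⟨δ, hδ0, fun a b h => hδ' h⟩
    choose δ hδ0 hδp using hδ
    set δ₀ := S.inf' hSne δ with hδ₀
    have hδ₀pos : 0 < δ₀ := by
      rw [hδ₀, Finset.lt_inf'_iff]
      exact fun t _ => hδ0 t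
    obtain ⟨m, f, -, hfr⟩ := hF.fin_param
    have hxy : ∀ i j, π (f i) = π (f j) := by
      intro i j
      have hi : f i ∈ π ⁻¹' {y₀} := hfr ▸ Set.mem_range_self i
      have hj : f j ∈ π ⁻¹' {y₀} := hfr ▸ Set.mem_range_self j
      simp only [Set.mem_preimage, Set.mem_singleton_iff] at hi hj
      rw [hi, hj]
    obtain ⟨tc, htc⟩ := aux_collapse_stmt4 π hc heq hprox m f hxy δ₀ hδ₀pos
    obtain ⟨x₀, hx₀⟩ := hsurj y₀
    have hx₀F : x₀ ∈ Set.range f := by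
      rw [hfr]; exact hx₀
    obtain ⟨i₀, hi₀⟩ := hx₀F
    have hsub : π ⁻¹' {tc • y₀} ⊆ Metric.ball (tc • f i₀) δ₀ := by
      intro a ha
      simp only [Set.mem_preimage, Set.mem_singleton_iff] at ha
      have h1 : π (tc⁻¹ • a) = y₀ := (hfib_smul tc y₀ a).mp ha
      have h2 : tc⁻¹ • a ∈ Set.range f := by
        rw [hfr]; exact h1
      obtain ⟨j, hj⟩ := h2
      have h3 : a = tc • f j := by rw [hj, smul_inv_smul]
      rw [h3]
      exact Metric.mem_ball.mpr (htc j i₀)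
    obtain ⟨t, htS, htV⟩ := Set.mem_iUnion₂.mp (hS (Set.mem_univ (tc • y₀)))
    refine ⟨t • tc • y₀, htV, t • (tc • f i₀), ?_⟩
    intro a ha
    simp only [Set.mem_preimage, Set.mem_singleton_iff] at ha
    have h1 : π (t⁻¹ • a) = tc • y₀ := (hfib_smul t _ a).mp ha
    have h2 : dist (t⁻¹ • a) (tc • f i₀) < δ t :=
      lt_of_lt_of_le (Metric.mem_ball.mp (hsub h1)) (Finset.inf'_le δ htS)
    have h3 : dist (t • t⁻¹ • a) (t • (tc • f i₀)) < r := hδp t _ _ h2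
    rw [smul_inv_smul] at h3
    exact Metric.mem_ball.mpr h3
  -- Baire category: points with singleton fibers exist
  have hGset : Dense (⋂ n : ℕ, D (1 / (n + 1))) :=
    dense_iInter_of_isOpen (fun n => hDopen _) (fun n => hDdense _ (by positivity))
  have hsingle : ∀ y : Y, y ∈ (⋂ n : ℕ, D (1 / (n + 1))) → ∀ x, π x = y →
      π ⁻¹' {y} = {x} := by
    intro y hy x hx
    apply Set.eq_singleton_iff_unique_mem.mpr
    refine ⟨hx, fun a ha => ?_⟩
    simp only [Set.mem_preimage, Set.mem_singleton_iff] at ha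
    have hdist : ∀ n : ℕ, dist a x < 2 / (n + 1) := by
      intro n
      obtain ⟨p, hp⟩ := Set.mem_iInter.mp hy n
      have h1 : dist a p < 1 / (n + 1) := Metric.mem_ball.mp (hp ha)
      have h2 : dist x p < 1 / (n + 1) := Metric.mem_ball.mp (hp hx)
      have h3 : dist a x ≤ dist a p + dist p x := dist_triangle a p x
      rw [dist_comm p x] at h3
      have : (2 : ℝ) / (n + 1) = 1 / (n + 1) + 1 / (n + 1) := by ring
      linarith
    by_contra hax
    obtain ⟨n, hn⟩ := exists_nat_one_div_lt
      (by have := dist_pos.mpr hax; linarith : (0 : ℝ) < dist a x / 2)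
    have h2n : (2 : ℝ) / (n + 1) = 2 * (1 / (n + 1)) := by ring
    have := hdist n
    rw [h2n] at this
    linarith
  obtain ⟨ystar, hystar⟩ := hGset.nonempty
  obtain ⟨xstar, hxstar⟩ := hsurj ystar
  set X₀ : Set X := ⋂ n : ℕ, π ⁻¹' (D (1 / (n + 1))) with hX₀
  have hX₀iff : ∀ x : X, x ∈ X₀ ↔ π x ∈ ⋂ n : ℕ, D (1 / (n + 1)) := by
    intro x
    simp [hX₀, Set.mem_iInter]
  have hGδ : IsGδ X₀ :=
    IsGδ.iInter fun n => ((hDopen _).preimage hc).isGδ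
  have horb : MulAction.orbit T xstar ⊆ X₀ := by
    rintro _ ⟨t, rfl⟩
    rw [hX₀iff]
    have hfibt : π ⁻¹' {π (t • xstar)} = {t • xstar} := by
      have hπt : π (t • xstar) = t • ystar := by rw [heq, hxstar]
      rw [hπt]
      ext a
      simp only [Set.mem_preimage, Set.mem_singleton_iff]
      rw [hfib_smul t ystar a]
      constructor
      · intro h
        have : t⁻¹ • a ∈ π ⁻¹' {ystar} := h
        rw [hsingle ystar hystar xstar hxstar] at this
        rw [Set.mem_singleton_iff] at this
        exact inv_smul_eq_iff.mp this
      · intro h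
        rw [h, inv_smul_smul, hxstar]
    apply Set.mem_iInter.mpr
    intro n
    exact ⟨t • xstar, by
      rw [hfibt]
      exact Set.singleton_subset_iff.mpr (Metric.mem_ball_self (by positivity))⟩
  have hdense : Dense X₀ := Dense.mono horb (hX xstar)
  refine ⟨X₀, hdense, hGδ, fun x hx => ?_⟩
  exact hsingle (π x) ((hX₀iff x).mp hx) x rfl

end AuxStmt4

/-- A proximal but not almost one to one extension of minimal flows has all
fibers infinite; in particular it is not almost finite to one. -/
theorem stmt4 {T : Type*} [Group T] [Countable T] [Infinite T]
    {X Y : Type*} [MetricSpace X] [CompactSpace X] [MulAction T X] [ContinuousConstSMul T X]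
    [MetricSpace Y] [CompactSpace Y] [MulAction T Y] [ContinuousConstSMul T Y]
    (hX : IsMinimalFlow T X) (hY : IsMinimalFlow T Y)
    (π : X → Y) (hπ : IsFactorMap T π)
    (hprox : IsProximalExt T π) (hnot : ¬ IsAlmostOneToOneExt π) :
    (∀ y : Y, (π ⁻¹' {y}).Infinite) ∧ ¬ IsAlmostFiniteToOneExt π := by
  have key : ∀ y : Y, (π ⁻¹' {y}).Infinite := by
    intro y
    by_contra h
    rw [Set.not_infinite] at h
    exact hnot (aux_a11_stmt4 hX hY π hπ hprox ⟨y, h⟩)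
  refine ⟨key, ?_⟩
  rintro ⟨y, hy⟩
  exact key y hy
end

section
/- Let π:(X,T)→(Y,T) be a factor map between minimal flows. Then π is almost proximal and point distal if and only if π is almost finite to one. -/
open MulAction Set

set_option linter.unusedSectionVars false

section OclBasics

variable {T : Type*} [Group T]
variable {Z : Type*} [TopologicalSpace Z] [MulAction T Z] [ContinuousConstSMul T Z]

/-- Orbit closure. -/
def ocl (T : Type*) [Group T] {Z : Type*} [TopologicalSpace Z] [MulAction T Z] (z : Z) : Set Z :=
  closure (MulAction.orbit T z)

lemma isClosed_ocl (z : Z) : IsClosed (ocl T z) := isClosed_closure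

lemma mem_ocl_self (z : Z) : z ∈ ocl T z :=
  subset_closure (MulAction.mem_orbit_self z)

lemma smul_mem_ocl {z w : Z} (t : T) (hw : w ∈ ocl T z) : t • w ∈ ocl T z := by
  have hmap : Set.MapsTo (fun x : Z => t • x) (MulAction.orbit T z) (MulAction.orbit T z) :=
    fun x hx => MulAction.smul_orbit_subset t z ⟨x, hx, rfl⟩
  exact hmap.closure (continuous_const_smul t) hw

lemma orbit_subset_ocl {z w : Z} (hw : w ∈ ocl T z) : MulAction.orbit T w ⊆ ocl T z := by
  rintro x ⟨t, rfl⟩; exact smul_mem_ocl t hw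

lemma ocl_subset_ocl {z w : Z} (hw : w ∈ ocl T z) : ocl T w ⊆ ocl T z :=
  closure_minimal (orbit_subset_ocl hw) (isClosed_ocl z)

lemma ocl_eq_of_minpt {z w : Z} (hz : IsMinimalPoint T z) (hw : w ∈ ocl T z) :
    ocl T w = ocl T z :=
  le_antisymm (ocl_subset_ocl hw) (ocl_subset_ocl (hz w hw))

lemma minpt_of_mem_ocl {z w : Z} (hz : IsMinimalPoint T z) (hw : w ∈ ocl T z) :
    IsMinimalPoint T w := by
  intro v hv
  have hv' : v ∈ ocl T z := by
    have : v ∈ ocl T w := hv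
    rw [ocl_eq_of_minpt hz hw] at this
    exact this
  have h2 : ocl T v = ocl T z := ocl_eq_of_minpt hz hv'
  show w ∈ ocl T v
  rw [h2]
  exact hw

/-- A nonempty closed invariant subset of a compact space contains a "minimal subflow";
we extract that every point of it is a minimal point together with mutual orbit-closure
containment. -/
lemma exists_minimal_subflow [CompactSpace Z] (S : Set Z) (hne : S.Nonempty)
    (hcl : IsClosed S) (hinv : ∀ (t : T), ∀ z ∈ S, t • z ∈ S) :
    ∃ Mn ⊆ S, Mn.Nonempty ∧ IsClosed Mn ∧ (∀ (t : T), ∀ z ∈ Mn, t • z ∈ Mn) ∧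
      ∀ w ∈ Mn, Mn ⊆ ocl T w := by
  classical
  set 𝒮 : Set (Set Z) :=
    {S' | S' ⊆ S ∧ S'.Nonempty ∧ IsClosed S' ∧ ∀ (t : T), ∀ z ∈ S', t • z ∈ S'} with h𝒮
  have hS : S ∈ 𝒮 := ⟨le_refl _, hne, hcl, hinv⟩
  have H : ∀ c ⊆ 𝒮, IsChain (· ⊆ ·) c → c.Nonempty →
      ∃ lb ∈ 𝒮, ∀ s ∈ c, lb ⊆ s := by
    intro c hc hchain hcne
    obtain ⟨s₀, hs₀⟩ := hcne
    haveI : Nonempty c := ⟨⟨s₀, hs₀⟩⟩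
    have hdir : Directed (· ⊇ ·) (fun s : c => (s : Set Z)) := by
      intro a b
      rcases hchain.total a.2 b.2 with h | h
      · exact ⟨a, le_refl _, h⟩
      · exact ⟨b, h, le_refl _⟩
    have hnei : (⋂ s : c, (s : Set Z)).Nonempty := by
      apply IsCompact.nonempty_iInter_of_directed_nonempty_isCompact_isClosed _ hdir
      · exact fun s => (hc s.2).2.1
      · exact fun s => ((hc s.2).2.2.1).isCompact
      · exact fun s => (hc s.2).2.2.1
    have hmem : (⋂ s : c, (s : Set Z)) ∈ 𝒮 := by
      refine ⟨(Set.iInter_subset _ (⟨s₀, hs₀⟩ : c)).trans (hc hs₀).1, hnei,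
        isClosed_iInter fun s => (hc s.2).2.2.1, ?_⟩
      intro t z hz
      exact Set.mem_iInter.2 fun s => (hc s.2).2.2.2 t z (Set.mem_iInter.1 hz s)
    exact ⟨⋂ s : c, (s : Set Z), hmem, fun s hs => Set.iInter_subset _ (⟨s, hs⟩ : c)⟩
  obtain ⟨m, hmS, hmin⟩ := zorn_superset_nonempty 𝒮 H S hS
  obtain ⟨hm1, hm2, hm3, hm4⟩ := hmin.prop
  refine ⟨m, hm1, hm2, hm3, hm4, ?_⟩
  intro w hw
  have hsub : ocl T w ⊆ m :=
    closure_minimal (fun x hx => by obtain ⟨t, rfl⟩ := hx; exact hm4 t w hw) hm3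
  have hocl : ocl T w ∈ 𝒮 :=
    ⟨hsub.trans hm1, ⟨w, mem_ocl_self w⟩, isClosed_ocl w, fun t z hz => smul_mem_ocl t hz⟩
  exact (hmin.eq_of_subset hocl hsub).ge

lemma minpt_of_minimal_subflow [CompactSpace Z] {Mn : Set Z}
    (hMn : ∀ w ∈ Mn, Mn ⊆ ocl T w) (hinv : ∀ (t : T), ∀ z ∈ Mn, t • z ∈ Mn)
    (hcl : IsClosed Mn) {w : Z} (hw : w ∈ Mn) : IsMinimalPoint T w := by
  intro v hv
  have hoclw : ocl T w ⊆ Mn :=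
    closure_minimal (fun x hx => by obtain ⟨t, rfl⟩ := hx; exact hinv t w hw) hcl
  exact hMn v (hoclw hv) hw

end OclBasics

section MinimalSpace

variable {T : Type*} [Group T]

lemma invariant_closed_eq_univ {W : Type*} [TopologicalSpace W] [MulAction T W]
    (hmin : IsMinimalFlow T W) {S : Set W} (hne : S.Nonempty) (hcl : IsClosed S)
    (hinv : ∀ (t : T), ∀ z ∈ S, t • z ∈ S) : S = univ := by
  obtain ⟨w, hw⟩ := hne
  have h1 : MulAction.orbit T w ⊆ S := by
    rintro x ⟨t, rfl⟩; exact hinv t w hw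
  have h2 : closure (MulAction.orbit T w) = univ := (hmin w).closure_eq
  have := closure_mono h1
  rw [h2, hcl.closure_eq] at this
  exact le_antisymm (subset_univ S) this

end MinimalSpace

section TupleLemmas

variable {T : Type*} [Group T]
variable {X : Type*} [MetricSpace X] [CompactSpace X] [MulAction T X] [ContinuousConstSMul T X]

lemma comp_smul_eq {n m : ℕ} (t : T) (f : Fin n → X) (σ : Fin m → Fin n) :
    (t • f) ∘ σ = t • (f ∘ σ) := rfl

lemma ocl_comp {n m : ℕ} (f : Fin n → X) (σ : Fin m → Fin n) :
    ocl T (f ∘ σ) = (fun g : Fin n → X => g ∘ σ) '' ocl T f := by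
  have hP : Continuous (fun g : Fin n → X => g ∘ σ) :=
    continuous_pi fun j => continuous_apply (σ j)
  have horb : (fun g : Fin n → X => g ∘ σ) '' (MulAction.orbit T f)
      = MulAction.orbit T (f ∘ σ) := by
    ext w
    constructor
    · rintro ⟨g, ⟨t, rfl⟩, rfl⟩; exact ⟨t, rfl⟩
    · rintro ⟨t, rfl⟩; exact ⟨t • f, ⟨t, rfl⟩, rfl⟩
  apply le_antisymm
  · have hcpt : IsCompact ((fun g : Fin n → X => g ∘ σ) '' ocl T f) :=
      ((isClosed_ocl f).isCompact).image hP
    refine closure_minimal ?_ hcpt.isClosed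
    rw [← horb]
    exact image_mono subset_closure
  · have h := image_closure_subset_closure_image (s := MulAction.orbit T f) hP
    rw [horb] at h
    exact h

lemma minpt_comp {n m : ℕ} {f : Fin n → X} (hf : IsMinimalPoint T f) (σ : Fin m → Fin n) :
    IsMinimalPoint T (f ∘ σ) := by
  intro w hw
  have hw' : w ∈ ocl T (f ∘ σ) := hw
  rw [ocl_comp f σ] at hw'
  obtain ⟨g, hg, rfl⟩ := hw'
  have hfg : f ∈ ocl T g := hf g hg
  have : f ∘ σ ∈ (fun g : Fin n → X => g ∘ σ) '' ocl T g := ⟨f, hfg, rfl⟩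
  rw [← ocl_comp g σ] at this
  exact this

lemma prox_of_collision {n : ℕ} {f ζ : Fin n → X} (hζ : ζ ∈ ocl T f) {i j : Fin n}
    (hij : ζ i = ζ j) : IsProximalPair T (f i) (f j) := by
  intro ε hε
  obtain ⟨g, hg, hd⟩ := Metric.mem_closure_iff.1 hζ (ε / 2) (by positivity)
  obtain ⟨t, rfl⟩ := hg
  refine ⟨t, ?_⟩
  have h1 : dist (ζ i) ((t • f) i) ≤ dist ζ (t • f) := dist_le_pi_dist ζ (t • f) i
  have h2 : dist (ζ j) ((t • f) j) ≤ dist ζ (t • f) := dist_le_pi_dist ζ (t • f) j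
  have : dist (t • f i) (t • f j) ≤ dist ((t • f) i) (ζ i) + dist (ζ j) ((t • f) j) := by
    have hij' : (ζ i) = (ζ j) := hij
    calc dist (t • f i) (t • f j) = dist ((t • f) i) ((t • f) j) := rfl
      _ ≤ dist ((t • f) i) (ζ j) + dist (ζ j) ((t • f) j) := dist_triangle _ _ _
      _ = dist ((t • f) i) (ζ i) + dist (ζ j) ((t • f) j) := by rw [hij']
  have hd' : dist ((t • f) i) (ζ i) + dist (ζ j) ((t • f) j) < ε := by
    rw [dist_comm ((t • f) i) (ζ i)]
    calc dist (ζ i) ((t • f) i) + dist (ζ j) ((t • f) j)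
        ≤ dist ζ (t • f) + dist ζ (t • f) := add_le_add h1 h2
      _ < ε / 2 + ε / 2 := by have := hd; linarith
      _ = ε := by ring
  linarith

lemma eq_of_minpt_prox {n : ℕ} {f : Fin n → X} (hf : IsMinimalPoint T f) {i j : Fin n}
    (hp : IsProximalPair T (f i) (f j)) : f i = f j := by
  classical
  have hsel : ∀ m : ℕ, ∃ t : T, dist (t • f i) (t • f j) < 1 / (m + 1 : ℝ) := by
    intro m
    exact hp (1 / (m + 1 : ℝ)) (by positivity)
  choose t ht using hsel
  set u : ℕ → (Fin n → X) := fun m => t m • f with hu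
  obtain ⟨ζ, φ, hφ, hconv⟩ := CompactSpace.tendsto_subseq u
  have hζ : ζ ∈ ocl T f := by
    refine mem_closure_of_tendsto hconv ?_
    exact Filter.Eventually.of_forall fun m => ⟨t (φ m), rfl⟩
  have hzij : ζ i = ζ j := by
    have hci : Filter.Tendsto (fun m => (u (φ m)) i) Filter.atTop (nhds (ζ i)) :=
      (tendsto_pi_nhds.1 hconv) i
    have hcj : Filter.Tendsto (fun m => (u (φ m)) j) Filter.atTop (nhds (ζ j)) :=
      (tendsto_pi_nhds.1 hconv) j
    have h1 : Filter.Tendsto (fun m => dist ((u (φ m)) i) ((u (φ m)) j)) Filter.atTop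
        (nhds (dist (ζ i) (ζ j))) := hci.dist hcj
    have h2 : Filter.Tendsto (fun m => dist ((u (φ m)) i) ((u (φ m)) j)) Filter.atTop
        (nhds 0) := by
      apply squeeze_zero (fun m => dist_nonneg) (g := fun m : ℕ => 1 / (m + 1 : ℝ))
      · intro m
        have hlt : dist ((u (φ m)) i) ((u (φ m)) j) < 1 / (φ m + 1 : ℝ) := ht (φ m)
        have hle : (1 : ℝ) / (φ m + 1 : ℝ) ≤ 1 / (m + 1 : ℝ) := by
          apply one_div_le_one_div_of_le (by positivity)
          have hmm : m ≤ φ m := hφ.le_apply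
          have : (m : ℝ) ≤ (φ m : ℝ) := Nat.cast_le.2 hmm
          linarith
        linarith
      · exact tendsto_one_div_add_atTop_nhds_zero_nat
    have := tendsto_nhds_unique h1 h2
    exact dist_eq_zero.1 this
  have hfz : f ∈ ocl T ζ := hf ζ hζ
  have hC : ocl T ζ ⊆ {g : Fin n → X | g i = g j} := by
    apply closure_minimal
    · rintro x ⟨s, rfl⟩
      show (s • ζ) i = (s • ζ) j
      show s • ζ i = s • ζ j
      rw [hzij]
    · exact isClosed_eq (continuous_apply i) (continuous_apply j)
  exact hC hfz

end TupleLemmas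

section CardHelpers

lemma finite_of_mk_le {X : Type*} {A : Set X} {N : ℕ} (h : Cardinal.mk ↥A ≤ (N : Cardinal)) :
    A.Finite :=
  Cardinal.lt_aleph0_iff_set_finite.1 (lt_of_le_of_lt h (Cardinal.nat_lt_aleph0 N))

lemma ncard_le_of_mk_le {X : Type*} {A : Set X} {N : ℕ} (h : Cardinal.mk ↥A ≤ (N : Cardinal)) :
    A.ncard ≤ N := by
  have hfin : A.Finite := finite_of_mk_le h
  haveI := hfin.fintype
  rw [Cardinal.mk_fintype, Nat.cast_le] at h
  rwa [Set.ncard_eq_toFinset_card', Set.toFinset_card]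

lemma mk_le_of_ncard_le {X : Type*} {A : Set X} {N : ℕ} (hfin : A.Finite)
    (h : A.ncard ≤ N) : Cardinal.mk ↥A ≤ (N : Cardinal) := by
  haveI := hfin.fintype
  rw [Cardinal.mk_fintype, Nat.cast_le]
  rwa [Set.ncard_eq_toFinset_card', Set.toFinset_card] at h

lemma exists_enum_of_ncard {X : Type*} {A : Set X} (hfin : A.Finite) :
    ∃ f : Fin A.ncard → X, Function.Injective f ∧ Set.range f = A := by
  haveI := hfin.fintype
  have hcard : Fintype.card ↥A = A.ncard := by
    rw [Set.ncard_eq_toFinset_card', Set.toFinset_card]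
  let e : ↥A ≃ Fin A.ncard := Fintype.equivFinOfCardEq hcard
  refine ⟨fun i => ((e.symm i : ↥A) : X), ?_, ?_⟩
  · intro a b hab
    exact e.symm.injective (Subtype.val_injective hab)
  · ext x
    constructor
    · rintro ⟨i, rfl⟩; exact (e.symm i).2
    · intro hx
      exact ⟨e ⟨x, hx⟩, by simp⟩

lemma ncard_range_of_injective {X : Type*} {m : ℕ} {f : Fin m → X}
    (hf : Function.Injective f) : (Set.range f).ncard = m := by
  rw [← Set.image_univ, Set.ncard_image_of_injective _ hf, Set.ncard_univ, Nat.card_eq_fintype_card,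
    Fintype.card_fin]

end CardHelpers

section FactorLemmas

variable {T : Type*} [Group T]
variable {X Y : Type*} [MetricSpace X] [CompactSpace X] [MulAction T X] [ContinuousConstSMul T X]
variable [MetricSpace Y] [CompactSpace Y] [MulAction T Y] [ContinuousConstSMul T Y]
variable {π : X → Y}

lemma prox_symm {x x' : X} (h : IsProximalPair T x x') : IsProximalPair T x' x := by
  intro ε hε
  obtain ⟨t, ht⟩ := h ε hε
  exact ⟨t, by rwa [dist_comm]⟩

lemma fiber_const_ocl (hπc : Continuous π) (hπe : ∀ (t : T) (x : X), π (t • x) = t • π x)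
    {n : ℕ} {f ζ : Fin n → X} (hf : ∀ i j, π (f i) = π (f j)) (hζ : ζ ∈ ocl T f) :
    ∀ i j, π (ζ i) = π (ζ j) := by
  have hCc : IsClosed {g : Fin n → X | ∀ i j, π (g i) = π (g j)} := by
    have hrw : {g : Fin n → X | ∀ i j, π (g i) = π (g j)}
        = ⋂ i, ⋂ j, {g : Fin n → X | π (g i) = π (g j)} := by
      ext g; simp [Set.mem_iInter, Set.mem_setOf_eq]
    rw [hrw]
    exact isClosed_iInter fun i => isClosed_iInter fun j =>
      isClosed_eq (hπc.comp (continuous_apply i)) (hπc.comp (continuous_apply j))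
  have hC : ocl T f ⊆ {g : Fin n → X | ∀ i j, π (g i) = π (g j)} := by
    apply closure_minimal _ hCc
    rintro x ⟨t, rfl⟩ i j
    show π (t • f i) = π (t • f j)
    rw [hπe, hπe, hf i j]
  exact hC hζ

lemma exists_mem_over (hY : IsMinimalFlow T Y) (hπc : Continuous π)
    (hπe : ∀ (t : T) (x : X), π (t • x) = t • π x) {n : ℕ} {S : Set (Fin n → X)}
    (hne : S.Nonempty) (hcl : IsClosed S) (hinv : ∀ (t : T), ∀ z ∈ S, t • z ∈ S)
    (i₀ : Fin n) (y : Y) : ∃ ζ ∈ S, π (ζ i₀) = y := by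
  have hq : Continuous (fun g : Fin n → X => π (g i₀)) := hπc.comp (continuous_apply i₀)
  have hA : (fun g : Fin n → X => π (g i₀)) '' S = univ := by
    apply invariant_closed_eq_univ hY (hne.image _)
    · exact (((hcl.isCompact).image hq)).isClosed
    · rintro t y' ⟨g, hg, rfl⟩
      exact ⟨t • g, hinv t g hg, by show π ((t • g) i₀) = t • π (g i₀); rw [← hπe]; rfl⟩
  have : y ∈ (fun g : Fin n → X => π (g i₀)) '' S := by rw [hA]; exact mem_univ y
  obtain ⟨ζ, hζ, hζy⟩ := this
  exact ⟨ζ, hζ, hζy⟩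

end FactorLemmas

section Directions

variable {T : Type*} [Group T] [Countable T]
variable {X Y : Type*} [MetricSpace X] [CompactSpace X] [MulAction T X] [ContinuousConstSMul T X]
variable [MetricSpace Y] [CompactSpace Y] [MulAction T Y] [ContinuousConstSMul T Y]
variable {π : X → Y}

/-- Key counting bound: a minimal tuple of distinct points lying in a single fiber has length
at most the cardinality of any finite fiber. -/
lemma tuple_bound (hY : IsMinimalFlow T Y) (hπc : Continuous π)
    (hπe : ∀ (t : T) (x : X), π (t • x) = t • π x) {y₀ : Y} (hy₀ : (π ⁻¹' {y₀}).Finite)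
    {m : ℕ} {f : Fin m → X} (hfinj : Function.Injective f) {y : Y}
    (hfy : ∀ i, π (f i) = y) (hfmin : IsMinimalPoint T f) :
    m ≤ (π ⁻¹' {y₀}).ncard := by
  rcases Nat.eq_zero_or_pos m with hm | hm
  · omega
  have i₀ : Fin m := ⟨0, hm⟩
  obtain ⟨Mn, hMnS, hMnne, hMncl, hMninv, hMnmin⟩ :=
    exists_minimal_subflow (T := T) (ocl T f) ⟨f, mem_ocl_self f⟩ (isClosed_ocl f)
      (fun t z hz => smul_mem_ocl t hz)
  obtain ⟨η, hη, hηy₀⟩ := exists_mem_over hY hπc hπe hMnne hMncl hMninv i₀ y₀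
  have hηocl : η ∈ ocl T f := hMnS hη
  have hηfib : ∀ i j, π (η i) = π (η j) :=
    fiber_const_ocl hπc hπe (fun i j => by rw [hfy i, hfy j]) hηocl
  have hηy : ∀ i, π (η i) = y₀ := fun i => by rw [hηfib i i₀, hηy₀]
  have hηinj : Function.Injective η := by
    intro i j hij
    have hprox : IsProximalPair T (f i) (f j) := prox_of_collision hηocl hij
    exact hfinj (eq_of_minpt_prox hfmin hprox)
  have hsub : Set.range η ⊆ π ⁻¹' {y₀} := by
    rintro x ⟨i, rfl⟩; exact hηy i
  calc m = (Set.range η).ncard := (_root_.ncard_range_of_injective hηinj).symm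
    _ ≤ (π ⁻¹' {y₀}).ncard := Set.ncard_le_ncard hsub hy₀

lemma almost_proximal_of_finite_fiber (hY : IsMinimalFlow T Y) (hπc : Continuous π)
    (hπe : ∀ (t : T) (x : X), π (t • x) = t • π x) {y₀ : Y} (hy₀ : (π ⁻¹' {y₀}).Finite) :
    IsAlmostProximalExt T π := by
  refine ⟨(π ⁻¹' {y₀}).ncard, ?_⟩
  intro y A hA hap
  have hbound : ∀ (B : Set X), B ⊆ A → B.Finite → B.ncard ≤ (π ⁻¹' {y₀}).ncard := by
    intro B hBA hBfin
    obtain ⟨f, hfinj, hfrange⟩ := exists_enum_of_ncard hBfin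
    have hfmem : ∀ i, f i ∈ A := fun i => hBA (hfrange ▸ Set.mem_range_self i)
    have hfy : ∀ i, π (f i) = y := fun i => hA (hfmem i)
    exact tuple_bound hY hπc hπe hy₀ hfinj hfy (hap _ f hfinj hfmem)
  have hAfin : A.Finite := by
    by_contra hinf
    have hinf' : A.Infinite := hinf
    obtain ⟨B, hBA, hBfin, hBcard⟩ :=
      Set.Infinite.exists_subset_ncard_eq hinf' ((π ⁻¹' {y₀}).ncard + 1)
    have := hbound B hBA hBfin
    omega
  exact mk_le_of_ncard_le hAfin (hbound A (le_refl _) hAfin)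

end Directions

section Lsc

variable {T : Type*} [Group T] [Countable T]
variable {X Y : Type*} [MetricSpace X] [CompactSpace X] [MulAction T X] [ContinuousConstSMul T X]
variable [MetricSpace Y] [CompactSpace Y] [MulAction T Y] [ContinuousConstSMul T Y]
variable {π : X → Y}

/-- Existence of a lower-semicontinuity point for the fiber map of a continuous map from a
compact metric space onto a compact metric (Baire) space. -/
lemma exists_lsc_point (hπc : Continuous π) (hne : Nonempty X) :
    ∃ y₁ : Y, ∀ ε : ℝ, 0 < ε → ∃ δ : ℝ, 0 < δ ∧ ∀ y' : Y, dist y₁ y' < δ →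
      ∀ z ∈ π ⁻¹' {y₁}, ∃ z', π z' = y' ∧ dist z z' < ε := by
  classical
  haveI := hne
  obtain ⟨u, hu⟩ := TopologicalSpace.exists_dense_seq X
  set E : ℕ × ℕ → Set Y :=
    fun pq => π '' Metric.closedBall (u pq.1) (1 / (pq.2 + 1 : ℝ)) with hE
  have hEclosed : ∀ pq, IsClosed (E pq) := by
    intro pq
    exact ((Metric.isClosed_closedBall.isCompact).image hπc).isClosed
  set U : ℕ × ℕ → Set Y := fun pq => interior (E pq) ∪ (E pq)ᶜ with hU
  have hUopen : ∀ pq, IsOpen (U pq) := fun pq =>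
    isOpen_interior.union (hEclosed pq).isOpen_compl
  have hUdense : ∀ pq, Dense (U pq) := by
    intro pq
    intro y
    rw [mem_closure_iff]
    intro o ho hyo
    by_cases hsub : o ⊆ E pq
    · have h2 : o ⊆ interior (E pq) := interior_maximal hsub ho
      exact ⟨y, hyo, mem_union_left _ (h2 hyo)⟩
    · obtain ⟨y', hy'o, hy'E⟩ := not_subset.mp hsub
      exact ⟨y', hy'o, mem_union_right _ hy'E⟩
  have hdense : Dense (⋂ pq, U pq) := dense_iInter_of_isOpen hUopen hUdense
  haveI : Nonempty Y := ⟨π (Classical.arbitrary X)⟩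
  obtain ⟨y₁, hy₁⟩ := hdense.nonempty
  refine ⟨y₁, ?_⟩
  intro ε hε
  obtain ⟨q, hq⟩ : ∃ q : ℕ, 1 / (q + 1 : ℝ) < ε / 3 := exists_nat_one_div_lt (by positivity)
  have hqpos : (0 : ℝ) < 1 / (q + 1 : ℝ) := by positivity
  -- cover the fiber by the open balls of radius 1/(q+1) around the dense sequence
  have hcov : (π ⁻¹' {y₁}) ⊆ ⋃ p : ℕ, Metric.ball (u p) (1 / (q + 1 : ℝ)) := by
    intro z _
    obtain ⟨p, hp⟩ := hu.exists_dist_lt z hqpos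
    exact Set.mem_iUnion.2 ⟨p, Metric.mem_ball.2 hp⟩
  have hfibcpt : IsCompact (π ⁻¹' {y₁}) :=
    (IsClosed.preimage hπc isClosed_singleton).isCompact
  obtain ⟨s, hs⟩ := hfibcpt.elim_finite_subcover _ (fun p => Metric.isOpen_ball) hcov
  -- for every p, a δ works if the ball around `u p` meets the fiber
  have hδp : ∀ p : ℕ, ∃ δ : ℝ, 0 < δ ∧
      ((π ⁻¹' {y₁} ∩ Metric.ball (u p) (1 / (q + 1 : ℝ))).Nonempty →
        Metric.ball y₁ δ ⊆ E (p, q)) := by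
    intro p
    by_cases hgood : (π ⁻¹' {y₁} ∩ Metric.ball (u p) (1 / (q + 1 : ℝ))).Nonempty
    · obtain ⟨z, hz, hzb⟩ := hgood
      have hyE : y₁ ∈ E (p, q) :=
        ⟨z, Metric.ball_subset_closedBall hzb, hz⟩
      have hyU : y₁ ∈ U (p, q) := by
        have := Set.mem_iInter.1 hy₁ (p, q)
        exact this
      have hyint : y₁ ∈ interior (E (p, q)) := by
        rcases hyU with h | h
        · exact h
        · exact absurd hyE h
      obtain ⟨δ, hδ, hball⟩ := Metric.isOpen_iff.1 isOpen_interior y₁ hyint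
      exact ⟨δ, hδ, fun _ => hball.trans interior_subset⟩
    · exact ⟨1, one_pos, fun h => absurd h hgood⟩
  choose δp hδppos hδpball using hδp
  by_cases hsne : s.Nonempty
  · refine ⟨s.inf' hsne δp, ?_, ?_⟩
    · exact (Finset.lt_inf'_iff hsne).2 fun p _ => hδppos p
    · intro y' hy' z hz
      obtain ⟨p, hps, hzball⟩ := Set.mem_iUnion₂.1 (hs hz)
      have hgood : (π ⁻¹' {y₁} ∩ Metric.ball (u p) (1 / (q + 1 : ℝ))).Nonempty :=
        ⟨z, hz, hzball⟩
      have hy'mem : y' ∈ Metric.ball y₁ (δp p) := by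
        rw [Metric.mem_ball, dist_comm]
        exact lt_of_lt_of_le hy' (Finset.inf'_le _ hps)
      obtain ⟨x', hx'b, hx'y⟩ := hδpball p hgood hy'mem
      refine ⟨x', hx'y, ?_⟩
      have h1 : dist z (u p) < 1 / (q + 1 : ℝ) := hzball
      have h2 : dist x' (u p) ≤ 1 / (q + 1 : ℝ) := hx'b
      calc dist z x' ≤ dist z (u p) + dist (u p) x' := dist_triangle _ _ _
        _ = dist z (u p) + dist x' (u p) := by rw [dist_comm (u p) x']
        _ < 1 / (q + 1 : ℝ) + 1 / (q + 1 : ℝ) := by linarith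
        _ < ε / 3 + ε / 3 := by linarith
        _ < ε := by linarith
  · refine ⟨1, one_pos, ?_⟩
    intro y' _ z hz
    exact absurd (hs hz) (by simp [Finset.not_nonempty_iff_eq_empty.1 hsne])
end Lsc

section PointDistal

variable {T : Type*} [Group T] [Countable T]
variable {X Y : Type*} [MetricSpace X] [CompactSpace X] [MulAction T X] [ContinuousConstSMul T X]
variable [MetricSpace Y] [CompactSpace Y] [MulAction T Y] [ContinuousConstSMul T Y]
variable {π : X → Y}

lemma point_distal_of_finite_fiber (hX : IsMinimalFlow T X) (hY : IsMinimalFlow T Y)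
    (hπc : Continuous π) (hπs : Function.Surjective π)
    (hπe : ∀ (t : T) (x : X), π (t • x) = t • π x) {y₀ : Y} (hy₀ : (π ⁻¹' {y₀}).Finite) :
    IsPointDistalExt T π := by
  classical
  obtain ⟨x₀', hx₀'⟩ := hπs y₀
  haveI hXne : Nonempty X := ⟨x₀'⟩
  set n₀ := (π ⁻¹' {y₀}).ncard with hn₀
  have hn₀pos : 0 < n₀ := (Set.ncard_pos hy₀).2 ⟨x₀', hx₀'⟩
  obtain ⟨y₁, hlsc⟩ := exists_lsc_point (π := π) hπc hXne
  -- Step 1 : the fiber over `y₁` is finite, of cardinality at most `n₀`.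
  have key : ∀ (m : ℕ) (f : Fin m → X), Function.Injective f →
      (∀ i, f i ∈ π ⁻¹' {y₁}) → m ≤ n₀ := by
    intro m f hfinj hfmem
    by_cases hm1 : m ≤ 1
    · omega
    · push_neg at hm1
      have hsep : ∃ ε : ℝ, 0 < ε ∧ ∀ i j : Fin m, i ≠ j → 3 * ε ≤ dist (f i) (f j) := by
        have hne2 : (Finset.univ.offDiag (α := Fin m)).Nonempty := by
          refine ⟨(⟨0, by omega⟩, ⟨1, by omega⟩), Finset.mem_offDiag.2 ⟨Finset.mem_univ _,
            Finset.mem_univ _, ?_⟩⟩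
          intro h
          have := congrArg Fin.val h
          simp at this
        set F := (Finset.univ.offDiag (α := Fin m)).image
          (fun p : Fin m × Fin m => dist (f p.1) (f p.2)) with hF
        have hFne : F.Nonempty := hne2.image _
        have hminpos : 0 < F.min' hFne := by
          obtain ⟨p, hp, hpe⟩ := Finset.mem_image.1 (F.min'_mem hFne)
          obtain ⟨-, -, hpne⟩ := Finset.mem_offDiag.1 hp
          rw [← hpe]
          exact dist_pos.2 fun hc => hpne (hfinj hc)
        refine ⟨F.min' hFne / 3, by positivity, ?_⟩
        intro i j hij
        have hmem : dist (f i) (f j) ∈ F :=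
          Finset.mem_image.2 ⟨(i, j), Finset.mem_offDiag.2
            ⟨Finset.mem_univ _, Finset.mem_univ _, hij⟩, rfl⟩
        have := F.min'_le _ hmem
        linarith
      obtain ⟨ε, hεpos, hεsep⟩ := hsep
      obtain ⟨δ, hδpos, hδ⟩ := hlsc ε hεpos
      obtain ⟨yw, ⟨t, rfl⟩, hyw⟩ := (hY y₀).exists_dist_lt y₁ hδpos
      have hz' : ∀ i : Fin m, ∃ z', π z' = t • y₀ ∧ dist (f i) z' < ε := by
        intro i
        exact hδ (t • y₀) hyw (f i) (hfmem i)
      choose z' hz'1 hz'2 using hz'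
      have hginj : Function.Injective fun i => t⁻¹ • z' i := by
        intro i j hij
        by_contra hne
        have hzz : z' i = z' j := by
          have := congrArg (fun x => t • x) hij
          simpa [smul_smul] using this
        have h3 : 3 * ε ≤ dist (f i) (f j) := hεsep i j hne
        have : dist (f i) (f j) ≤ dist (f i) (z' i) + dist (z' j) (f j) := by
          calc dist (f i) (f j) ≤ dist (f i) (z' j) + dist (z' j) (f j) := dist_triangle _ _ _
            _ = dist (f i) (z' i) + dist (z' j) (f j) := by rw [hzz]
        have h4 : dist (z' j) (f j) < ε := by rw [dist_comm]; exact hz'2 j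
        have h5 := hz'2 i
        linarith
      have hgmem : Set.range (fun i => t⁻¹ • z' i) ⊆ π ⁻¹' {y₀} := by
        rintro x ⟨i, rfl⟩
        show π (t⁻¹ • z' i) = y₀
        rw [hπe, hz'1 i, inv_smul_smul]
      calc m = (Set.range fun i => t⁻¹ • z' i).ncard := (_root_.ncard_range_of_injective hginj).symm
        _ ≤ n₀ := Set.ncard_le_ncard hgmem hy₀
  have hB : ∀ B ⊆ π ⁻¹' {y₁}, B.Finite → B.ncard ≤ n₀ := by
    intro B hBfib hBfin
    obtain ⟨f, hfinj, hfrange⟩ := exists_enum_of_ncard hBfin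
    exact key _ f hfinj fun i => hBfib (hfrange ▸ Set.mem_range_self i)
  have hfib₁fin : (π ⁻¹' {y₁}).Finite := by
    by_contra hinf
    have hinf' : (π ⁻¹' {y₁}).Infinite := hinf
    obtain ⟨B, hBA, hBfin, hBcard⟩ := Set.Infinite.exists_subset_ncard_eq hinf' (n₀ + 1)
    have := hB B hBA hBfin
    omega
  set k' := (π ⁻¹' {y₁}).ncard with hk'
  have hk'pos : 0 < k' := (Set.ncard_pos hfib₁fin).2 ⟨(hπs y₁).choose, (hπs y₁).choose_spec⟩
  obtain ⟨ξ, hξinj, hξrange⟩ := exists_enum_of_ncard hfib₁fin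
  have hξy : ∀ i, π (ξ i) = y₁ := by
    intro i
    have h : ξ i ∈ Set.range ξ := Set.mem_range_self i
    rw [hξrange] at h
    exact h
  obtain ⟨Mn, hMnS, hMnne, hMncl, hMninv, hMnmin⟩ :=
    exists_minimal_subflow (T := T) (ocl T ξ) ⟨ξ, mem_ocl_self ξ⟩ (isClosed_ocl ξ)
      (fun t z hz => smul_mem_ocl t hz)
  have i₀ : Fin k' := ⟨0, hk'pos⟩
  obtain ⟨w, hw, hwy₁⟩ := exists_mem_over hY hπc hπe hMnne hMncl hMninv i₀ y₁
  have hwocl : w ∈ ocl T ξ := hMnS hw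
  have hwfib : ∀ i, π (w i) = y₁ := by
    have h := fiber_const_ocl hπc hπe (fun i j => by rw [hξy i, hξy j]) hwocl
    intro i
    rw [h i i₀, hwy₁]
  have hrange_sub : Set.range w ⊆ π ⁻¹' {y₁} := by
    rintro x ⟨i, rfl⟩; exact hwfib i
  have hfib_sub : π ⁻¹' {y₁} ⊆ Set.range w := by
    intro z hz
    have hcl : z ∈ closure (Set.range w) := by
      rw [Metric.mem_closure_iff]
      intro ε hε
      obtain ⟨δ, hδpos, hδ⟩ := hlsc (ε / 2) (by positivity)
      obtain ⟨δ'', hδ''pos, hδ''⟩ := Metric.continuous_iff.mp hπc (w i₀) δ hδpos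
      set ρ := min (ε / 2) δ'' with hρ
      have hρpos : 0 < ρ := lt_min (by positivity) hδ''pos
      obtain ⟨v, ⟨t, rfl⟩, hv⟩ := Metric.mem_closure_iff.1 hwocl ρ hρpos
      have hcoord : ∀ j, dist (w j) ((t • ξ) j) < ρ :=
        fun j => lt_of_le_of_lt (dist_le_pi_dist w (t • ξ) j) hv
      have hty₁ : dist y₁ (t • y₁) < δ := by
        have h1 : dist ((t • ξ) i₀) (w i₀) < δ'' :=
          lt_of_lt_of_le (by rw [dist_comm]; exact hcoord i₀) (min_le_right _ _)
        have h2 := hδ'' ((t • ξ) i₀) h1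
        have h3 : π ((t • ξ) i₀) = t • y₁ := by
          show π (t • ξ i₀) = t • y₁
          rw [hπe, hξy i₀]
        rw [h3, hwy₁] at h2
        rw [dist_comm]
        exact h2
      obtain ⟨z', hz'y, hz'd⟩ := hδ (t • y₁) hty₁ z hz
      have hz'mem : t⁻¹ • z' ∈ π ⁻¹' {y₁} := by
        show π (t⁻¹ • z') = y₁
        rw [hπe, hz'y, inv_smul_smul]
      rw [← hξrange] at hz'mem
      obtain ⟨j, hj⟩ := hz'mem
      have hz'eq : z' = (t • ξ) j := by
        show z' = t • ξ j
        rw [hj, smul_inv_smul]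
      refine ⟨w j, Set.mem_range_self j, ?_⟩
      calc dist z (w j) ≤ dist z z' + dist z' (w j) := dist_triangle _ _ _
        _ < ε / 2 + ρ := by
            have : dist z' (w j) < ρ := by rw [hz'eq, dist_comm]; exact hcoord j
            linarith
        _ ≤ ε / 2 + ε / 2 := by have := min_le_left (ε / 2) δ''; simp only [hρ]; linarith
        _ = ε := by ring
    rwa [((Set.finite_range w).isClosed).closure_eq] at hcl
  have hfeq : π ⁻¹' {y₁} = Set.range w := le_antisymm hfib_sub hrange_sub
  have hwinj : Function.Injective w := by
    intro a b hab
    by_contra hne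
    have himg : Set.range w = w '' (Set.univ \ {b}) := by
      ext x
      constructor
      · rintro ⟨i, rfl⟩
        by_cases hib : i = b
        · exact ⟨a, ⟨Set.mem_univ _, fun h => hne (h : a = b)⟩, by rw [hib, hab]⟩
        · exact ⟨i, ⟨Set.mem_univ _, hib⟩, rfl⟩
      · rintro ⟨i, -, rfl⟩
        exact Set.mem_range_self i
    have hc1 : (Set.range w).ncard = k' := by rw [← hfeq]
    have hc2 : (Set.univ \ {b} : Set (Fin k')).ncard = k' - 1 := by
      rw [Set.ncard_diff_singleton_of_mem (Set.mem_univ b), Set.ncard_univ,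
        Nat.card_eq_fintype_card, Fintype.card_fin]
    have hc3 : (w '' (Set.univ \ {b})).ncard ≤ (Set.univ \ {b} : Set (Fin k')).ncard :=
      Set.ncard_image_le (Set.toFinite _)
    rw [← himg, hc1, hc2] at hc3
    omega
  have hwmin : IsMinimalPoint T w := minpt_of_minimal_subflow hMnmin hMninv hMncl hw
  refine ⟨w i₀, ?_⟩
  intro x' hx' hne hprox
  have hx'mem : x' ∈ π ⁻¹' {y₁} := by
    show π x' = y₁
    rw [hx', hwy₁]
  rw [hfeq] at hx'mem
  obtain ⟨j, rfl⟩ := hx'mem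
  exact hne (eq_of_minpt_prox hwmin (prox_symm hprox))

end PointDistal

section Forward

variable {T : Type*} [Group T] [Countable T]
variable {X Y : Type*} [MetricSpace X] [CompactSpace X] [MulAction T X] [ContinuousConstSMul T X]
variable [MetricSpace Y] [CompactSpace Y] [MulAction T Y] [ContinuousConstSMul T Y]
variable {π : X → Y}

lemma minpt_const_one (hX : IsMinimalFlow T X) (x : X) :
    IsMinimalPoint T (fun _ : Fin 1 => x) := by
  intro w hw
  set c : X → (Fin 1 → X) := fun z _ => z with hc
  have hcc : Continuous c := continuous_pi fun _ => continuous_id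
  have horb : ∀ z : X, c '' MulAction.orbit T z = MulAction.orbit T (c z) := by
    intro z
    ext g
    constructor
    · rintro ⟨x', ⟨t, rfl⟩, rfl⟩; exact ⟨t, rfl⟩
    · rintro ⟨t, rfl⟩; exact ⟨t • z, ⟨t, rfl⟩, rfl⟩
  have hwc : w = c (w 0) := by
    funext i
    have : i = 0 := Subsingleton.elim i 0
    rw [this]
  -- the evaluation of `w` lies in the orbit closure of `x`
  have hev : w 0 ∈ closure (MulAction.orbit T x) := by
    have h1 : Continuous (fun g : Fin 1 → X => g 0) := continuous_apply 0
    have h2 : (fun g : Fin 1 → X => g 0) '' closure (MulAction.orbit T (c x))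
        ⊆ closure ((fun g : Fin 1 → X => g 0) '' MulAction.orbit T (c x)) :=
      image_closure_subset_closure_image h1
    have h3 : (fun g : Fin 1 → X => g 0) '' MulAction.orbit T (c x)
        = MulAction.orbit T x := by
      ext x'
      constructor
      · rintro ⟨g, ⟨t, rfl⟩, rfl⟩; exact ⟨t, rfl⟩
      · rintro ⟨t, rfl⟩; exact ⟨c (t • x), ⟨t, rfl⟩, rfl⟩
    have h4 : w 0 ∈ (fun g : Fin 1 → X => g 0) '' closure (MulAction.orbit T (c x)) :=
      ⟨w, hw, rfl⟩
    have := h2 h4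
    rwa [h3] at this
  have hx' : x ∈ closure (MulAction.orbit T (w 0)) := hX (w 0) x
  have h5 : c '' closure (MulAction.orbit T (w 0))
      ⊆ closure (c '' MulAction.orbit T (w 0)) := image_closure_subset_closure_image hcc
  have h6 : c x ∈ closure (c '' MulAction.orbit T (w 0)) := h5 ⟨x, hx', rfl⟩
  rw [horb, ← hwc] at h6
  exact h6

lemma ap_range_of_minpt {n : ℕ} {f : Fin n → X} (hmin : IsMinimalPoint T f) :
    IsAlmostPeriodicSet T (Set.range f) := by
  intro m g _ hgmem
  choose σ hσ using hgmem
  have hgf : g = f ∘ σ := funext fun i => (hσ i).symm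
  rw [hgf]
  exact minpt_comp hmin σ

lemma finite_fiber_of_ap_pd (hX : IsMinimalFlow T X) (hY : IsMinimalFlow T Y)
    (hπc : Continuous π) (hπs : Function.Surjective π)
    (hπe : ∀ (t : T) (x : X), π (t • x) = t • π x)
    (hap : IsAlmostProximalExt T π) (hpd : IsPointDistalExt T π) :
    IsAlmostFiniteToOneExt π := by
  classical
  obtain ⟨N, hN⟩ := hap
  obtain ⟨x₀, hx₀⟩ := hpd
  haveI : Nonempty X := ⟨x₀⟩
  set P : ℕ → Prop := fun n => ∃ (y : Y) (f : Fin n → X), Function.Injective f ∧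
    (∀ i, π (f i) = y) ∧ IsMinimalPoint T f with hP
  have hPbound : ∀ n, P n → n ≤ N := by
    rintro n ⟨y, f, hfinj, hfy, hfmin⟩
    have hap' : IsAlmostPeriodicSet T (Set.range f) := ap_range_of_minpt hfmin
    have hsub : Set.range f ⊆ π ⁻¹' {y} := by rintro x ⟨i, rfl⟩; exact hfy i
    have h := ncard_le_of_mk_le (hN y _ hsub hap')
    rwa [_root_.ncard_range_of_injective hfinj] at h
  have hP1 : P 1 := ⟨π x₀, fun _ => x₀, fun a b _ => Subsingleton.elim a b, fun _ => rfl,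
    minpt_const_one hX x₀⟩
  set k := Nat.findGreatest P N with hk
  have hk1 : 1 ≤ k := Nat.le_findGreatest (hPbound 1 hP1) hP1
  have hPk : P k := Nat.findGreatest_spec (hPbound 1 hP1) hP1
  have hkmax : ∀ m, P m → m ≤ k := fun m hm => Nat.le_findGreatest (hPbound m hm) hm
  obtain ⟨yA, f₀, hf₀inj, hf₀y, hf₀min⟩ := hPk
  set M := ocl T f₀ with hM
  set i0 : Fin k := ⟨0, hk1⟩ with hi0
  have hMcpt : IsCompact M := (isClosed_ocl f₀).isCompact
  have hMfib : ∀ w ∈ M, ∀ i j, π (w i) = π (w j) := fun w hw =>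
    fiber_const_ocl hπc hπe (fun i j => by rw [hf₀y i, hf₀y j]) hw
  have hMinj : ∀ w ∈ M, Function.Injective w := by
    intro w hw i j hij
    exact hf₀inj (eq_of_minpt_prox hf₀min (prox_of_collision hw hij))
  have hMonto : ∀ (x : X) (i : Fin k), ∃ w ∈ M, w i = x := by
    intro x i
    have himg : (fun w : Fin k → X => w i) '' M = Set.univ := by
      refine invariant_closed_eq_univ hX ?_ ?_ ?_
      · exact ⟨f₀ i, ⟨f₀, mem_ocl_self f₀, rfl⟩⟩
      · exact ((hMcpt.image (continuous_apply i))).isClosed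
      · rintro t x' ⟨w, hw, rfl⟩
        exact ⟨t • w, smul_mem_ocl t hw, rfl⟩
    have hx : x ∈ (fun w : Fin k → X => w i) '' M := by rw [himg]; trivial
    obtain ⟨w, hw, hwx⟩ := hx
    exact ⟨w, hw, hwx⟩
  -- every point of `M` over `π x₀` contains `x₀` among its coordinates
  have hE4 : ∀ w ∈ M, π (w i0) = π x₀ → x₀ ∈ Set.range w := by
    intro w hw hwy
    set g : Fin (k + 1) → X := Fin.snoc w x₀ with hg
    have hgcast : ∀ i : Fin k, g (Fin.castSucc i) = w i := fun i => by simp [hg]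
    have hglast : g (Fin.last k) = x₀ := by simp [hg]
    have hgall : ∀ i, π (g i) = π x₀ := by
      intro i
      refine Fin.lastCases ?_ ?_ i
      · rw [hglast]
      · intro i'
        rw [hgcast i', hMfib w hw i' i0, hwy]
    have hgfib : ∀ i j, π (g i) = π (g j) := fun i j => by rw [hgall i, hgall j]
    obtain ⟨Mn, hMnS, hMnne, hMncl, hMninv, hMnmin⟩ :=
      exists_minimal_subflow (T := T) (ocl T g) ⟨g, mem_ocl_self g⟩ (isClosed_ocl g)
        (fun t z hz => smul_mem_ocl t hz)
    obtain ⟨ζ, hζMn⟩ := hMnne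
    have hζ : ζ ∈ ocl T g := hMnS hζMn
    have hζmin : IsMinimalPoint T ζ := minpt_of_minimal_subflow hMnmin hMninv hMncl hζMn
    by_cases hcoll : ∃ i : Fin k, ζ (Fin.castSucc i) = ζ (Fin.last k)
    · obtain ⟨i, hi⟩ := hcoll
      have hprox : IsProximalPair T (g (Fin.castSucc i)) (g (Fin.last k)) :=
        prox_of_collision hζ hi
      rw [hgcast, hglast] at hprox
      have hwi : π (w i) = π x₀ := by rw [hMfib w hw i i0, hwy]
      by_cases heq : w i = x₀
      · exact ⟨i, heq⟩
      · exact absurd (prox_symm hprox) (hx₀ (w i) hwi heq)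
    · push_neg at hcoll
      have hζsub : ζ ∘ Fin.castSucc ∈ M := by
        have h1 : ζ ∘ Fin.castSucc ∈ ocl T (g ∘ Fin.castSucc) := by
          rw [ocl_comp]
          exact ⟨ζ, hζ, rfl⟩
        have h2 : g ∘ Fin.castSucc = w := funext hgcast
        rw [h2] at h1
        have h3 : ocl T w = M := ocl_eq_of_minpt hf₀min hw
        rwa [h3] at h1
      have hζinj : Function.Injective ζ := by
        intro a b hab
        rcases Fin.eq_castSucc_or_eq_last a with ⟨a', rfl⟩ | rfl
        · rcases Fin.eq_castSucc_or_eq_last b with ⟨b', rfl⟩ | rfl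
          · have := hMinj _ hζsub (show (ζ ∘ Fin.castSucc) a' = (ζ ∘ Fin.castSucc) b' from hab)
            rw [this]
          · exact absurd hab (hcoll a')
        · rcases Fin.eq_castSucc_or_eq_last b with ⟨b', rfl⟩ | rfl
          · exact absurd hab.symm (hcoll b')
          · rfl
      have hζfib : ∀ i j, π (ζ i) = π (ζ j) := fiber_const_ocl hπc hπe hgfib hζ
      have hPk1 : P (k + 1) :=
        ⟨π (ζ 0), ζ, hζinj, fun i => hζfib i 0, hζmin⟩
      have := hkmax (k + 1) hPk1
      omega
  set Core : Set X := {x | ∀ w ∈ M, π (w i0) = π x → x ∈ Set.range w} with hCore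
  have hx₀Core : x₀ ∈ Core := fun w hw hwy => hE4 w hw hwy
  have hCoreInv : ∀ (t : T), ∀ x ∈ Core, t • x ∈ Core := by
    intro t x hx w hw hwy
    have hw' : t⁻¹ • w ∈ M := smul_mem_ocl t⁻¹ hw
    have hwy' : π ((t⁻¹ • w) i0) = π x := by
      show π (t⁻¹ • w i0) = π x
      rw [hπe, hwy, hπe, inv_smul_smul]
    obtain ⟨j, hj⟩ := hx (t⁻¹ • w) hw' hwy'
    refine ⟨j, ?_⟩
    have : t • (t⁻¹ • w) j = t • x := by rw [hj]
    rwa [show t • (t⁻¹ • w) j = w j from by show t • (t⁻¹ • w j) = w j; rw [smul_inv_smul]]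
      at this
  have hOrbitCore : ∀ t : T, t • x₀ ∈ Core := fun t => hCoreInv t x₀ hx₀Core
  set Bad : ℕ → Set X :=
    fun n => {x | ∃ w ∈ M, π (w i0) = π x ∧ ∀ i, 1 / (n + 1 : ℝ) ≤ dist x (w i)} with hBad
  have hBadCl : ∀ n, IsClosed (Bad n) := by
    intro n
    apply IsSeqClosed.isClosed
    intro xs x hxs hlim
    choose ws hws1 hws2 hws3 using hxs
    obtain ⟨w, hwM, φ, hφ, hconv⟩ := hMcpt.tendsto_subseq hws1
    refine ⟨w, hwM, ?_, ?_⟩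
    · have h1 : Filter.Tendsto (fun m => π ((ws (φ m)) i0)) Filter.atTop (nhds (π (w i0))) :=
        (hπc.tendsto _).comp ((tendsto_pi_nhds.1 hconv) i0)
      have h2 : Filter.Tendsto (fun m => π (xs (φ m))) Filter.atTop (nhds (π x)) :=
        (hπc.tendsto x).comp (hlim.comp hφ.tendsto_atTop)
      have heq : (fun m => π ((ws (φ m)) i0)) = fun m => π (xs (φ m)) :=
        funext fun m => hws2 (φ m)
      rw [heq] at h1
      exact tendsto_nhds_unique h1 h2
    · intro i
      have hd : Filter.Tendsto (fun m => dist (xs (φ m)) ((ws (φ m)) i)) Filter.atTop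
          (nhds (dist x (w i))) :=
        (hlim.comp hφ.tendsto_atTop).dist ((tendsto_pi_nhds.1 hconv) i)
      exact ge_of_tendsto hd (Filter.Eventually.of_forall fun m => hws3 (φ m) i)
  have hBadNwd : ∀ n, interior (Bad n) = ∅ := by
    intro n
    have hd : Dense (Bad n)ᶜ := by
      have hsub : MulAction.orbit T x₀ ⊆ (Bad n)ᶜ := by
        rintro x ⟨t, rfl⟩ hbad
        obtain ⟨w, hw, hwy, hdist⟩ := hbad
        obtain ⟨j, hj⟩ := hOrbitCore t w hw hwy
        have h1 := hdist j
        rw [hj] at h1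
        simp only [dist_self] at h1
        have : (0 : ℝ) < 1 / (n + 1 : ℝ) := by positivity
        linarith
      exact Dense.mono hsub (hX x₀)
    have h2 : closure ((Bad n)ᶜ) = Set.univ := hd.closure_eq
    rw [← compl_compl (Bad n)]
    rw [interior_compl, h2]
    simp
  have hCoreCompl : ∀ x, x ∉ Core → ∃ n, x ∈ Bad n := by
    intro x hx
    have hx' : ∃ w ∈ M, π (w i0) = π x ∧ x ∉ Set.range w := by
      by_contra hc
      push_neg at hc
      exact hx fun w hw hwy => hc w hw hwy
    obtain ⟨w, hw, hwy, hxr⟩ := hx'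
    have hpos : ∀ i, 0 < dist x (w i) := fun i => dist_pos.2 fun h => hxr ⟨i, h.symm⟩
    haveI : Nonempty (Fin k) := ⟨i0⟩
    have hdpos : 0 < Finset.univ.inf' Finset.univ_nonempty (fun i => dist x (w i)) :=
      (Finset.lt_inf'_iff _).2 fun i _ => hpos i
    obtain ⟨n, hn⟩ := exists_nat_one_div_lt hdpos
    exact ⟨n, w, hw, hwy, fun i =>
      le_trans (le_of_lt hn) (Finset.inf'_le _ (Finset.mem_univ i))⟩
  -- Baire category on the compact metric space M
  haveI : CompactSpace ↥M := isCompact_iff_compactSpace.1 hMcpt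
  haveI : Nonempty ↥M := ⟨⟨f₀, mem_ocl_self f₀⟩⟩
  set D : ℕ × Fin k → Set ↥M := fun p => {w : ↥M | (w : Fin k → X) p.2 ∈ Bad p.1} with hD
  have hDcl : ∀ p, IsClosed (D p) := fun p =>
    (hBadCl p.1).preimage ((continuous_apply p.2).comp continuous_subtype_val)
  have hnotcover : ∃ w : ↥M, ∀ p, w ∉ D p := by
    by_contra hcov
    push_neg at hcov
    have hU : ⋃ p, D p = Set.univ := by
      rw [Set.eq_univ_iff_forall]
      intro w
      obtain ⟨p, hp⟩ := hcov w
      exact Set.mem_iUnion.2 ⟨p, hp⟩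
    obtain ⟨p, hp⟩ := nonempty_interior_of_iUnion_of_closed hDcl hU
    obtain ⟨whatw, hwhat⟩ := hp
    obtain ⟨ρ, hρpos, hρ⟩ := Metric.isOpen_iff.1 isOpen_interior whatw hwhat
    set Kc : Set X := (fun w : Fin k → X => w p.2) ''
      (M ∩ Metric.closedBall (whatw : Fin k → X) (ρ / 2)) with hKc
    have hKcBad : Kc ⊆ Bad p.1 := by
      rintro x ⟨w, ⟨hwM, hwball⟩, rfl⟩
      have hmem : (⟨w, hwM⟩ : ↥M) ∈ Metric.ball whatw ρ := by
        rw [Metric.mem_ball]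
        have h1 : dist (⟨w, hwM⟩ : ↥M) whatw = dist w (whatw : Fin k → X) := Subtype.dist_eq _ _
        rw [h1]
        have h2 : dist w (whatw : Fin k → X) ≤ ρ / 2 := hwball
        linarith
      have h3 : (⟨w, hwM⟩ : ↥M) ∈ D p := interior_subset (hρ hmem)
      exact h3
    have hKccpt : IsCompact Kc :=
      (hMcpt.inter_right Metric.isClosed_closedBall).image (continuous_apply p.2)
    have hcover : ⋃ t : T, (fun z : X => t • z) '' Kc = Set.univ := by
      rw [Set.eq_univ_iff_forall]
      intro x
      obtain ⟨w, hwM, hwx⟩ := hMonto x p.2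
      have hwhatM : (whatw : Fin k → X) ∈ ocl T w := by
        rw [ocl_eq_of_minpt hf₀min hwM]
        exact whatw.2
      obtain ⟨v, ⟨t, rfl⟩, hv⟩ := Metric.mem_closure_iff.1 hwhatM (ρ / 2) (by positivity)
      have h1 : t • w ∈ M ∩ Metric.closedBall (whatw : Fin k → X) (ρ / 2) :=
        ⟨smul_mem_ocl t hwM, by rw [Metric.mem_closedBall, dist_comm]; exact le_of_lt hv⟩
      refine Set.mem_iUnion.2 ⟨t⁻¹, ⟨(t • w) p.2, ⟨t • w, h1, rfl⟩, ?_⟩⟩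
      show t⁻¹ • (t • w) p.2 = x
      rw [← hwx]
      show t⁻¹ • (t • w p.2) = w p.2
      rw [inv_smul_smul]
    have hclosed : ∀ t : T, IsClosed ((fun z : X => t • z) '' Kc) := fun t =>
      (hKccpt.image (continuous_const_smul t)).isClosed
    obtain ⟨t, htne⟩ := nonempty_interior_of_iUnion_of_closed hclosed hcover
    have hKcint : (interior Kc).Nonempty := by
      have h1 : (Homeomorph.smul t (α := X)) '' interior Kc
          = interior ((Homeomorph.smul t (α := X)) '' Kc) :=
        (Homeomorph.smul t (α := X)).image_interior Kc
      have h2 : (Homeomorph.smul t (α := X)) '' Kc = (fun z : X => t • z) '' Kc := rfl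
      rw [h2] at h1
      obtain ⟨x, hx⟩ := htne
      rw [← h1] at hx
      obtain ⟨x', hx', -⟩ := hx
      exact ⟨x', hx'⟩
    obtain ⟨x, hx⟩ := hKcint
    have hxb : x ∈ interior (Bad p.1) := interior_mono hKcBad hx
    rw [hBadNwd p.1] at hxb
    exact hxb
  obtain ⟨wstar, hwstar⟩ := hnotcover
  have hwCore : ∀ i, (wstar : Fin k → X) i ∈ Core := by
    intro i
    by_contra hc
    obtain ⟨n, hn⟩ := hCoreCompl _ hc
    exact hwstar (n, i) hn
  refine ⟨π ((wstar : Fin k → X) i0), ?_⟩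
  apply Set.Finite.subset (Set.finite_range (wstar : Fin k → X))
  intro z hz
  have hzy : π z = π ((wstar : Fin k → X) i0) := hz
  obtain ⟨w', hw', hw'z⟩ := hMonto z i0
  have hw'y : ∀ i, π (w' i0) = π ((wstar : Fin k → X) i) := by
    intro i
    rw [hw'z, hzy, hMfib _ wstar.2 i0 i]
  have hsub : Set.range (wstar : Fin k → X) ⊆ Set.range w' := by
    rintro x ⟨i, rfl⟩
    exact hwCore i w' hw' (hw'y i)
  have hkc : (Set.range w').ncard ≤ (Set.range (wstar : Fin k → X)).ncard := by
    rw [_root_.ncard_range_of_injective (hMinj w' hw'), _root_.ncard_range_of_injective (hMinj _ wstar.2)]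
  have heq : Set.range (wstar : Fin k → X) = Set.range w' :=
    Set.eq_of_subset_of_ncard_le hsub hkc (Set.finite_range _)
  rw [heq]
  exact ⟨i0, hw'z⟩

end Forward
/-- An extension of minimal flows is almost proximal and point distal iff
it is almost finite to one. -/
theorem stmt7 {T : Type*} [Group T] [Countable T] [Infinite T]
    {X Y : Type*} [MetricSpace X] [CompactSpace X] [MulAction T X] [ContinuousConstSMul T X]
    [MetricSpace Y] [CompactSpace Y] [MulAction T Y] [ContinuousConstSMul T Y]
    (hX : IsMinimalFlow T X) (hY : IsMinimalFlow T Y)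
    (π : X → Y) (hπ : IsFactorMap T π) :
    (IsAlmostProximalExt T π ∧ IsPointDistalExt T π) ↔ IsAlmostFiniteToOneExt π := by
  obtain ⟨hπc, hπs, hπe⟩ := hπ
  constructor
  · rintro ⟨hap, hpd⟩
    exact finite_fiber_of_ap_pd hX hY hπc hπs hπe hap hpd
  · rintro ⟨y₀, hy₀⟩
    exact ⟨almost_proximal_of_finite_fiber hY hπc hπe hy₀,
      point_distal_of_finite_fiber hX hY hπc hπs hπe hy₀⟩
end

section
/- Let (X,T) be a proximal minimal flow, i.e., a minimal flow in which every pair of points of X is proximal. Then for every x∈X, the set {y∈X : the closure of the T-orbit of (x,y) in the product flow (X×X,T) equals X×X} is a residual subset of X. -/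
open Set Filter Metric

private lemma one_div_mono' {i j : ℕ} (h : i ≤ j) : (1 : ℝ) / (j + 1) ≤ 1 / (i + 1) := by
  apply one_div_le_one_div_of_le
  · positivity
  · exact_mod_cast Nat.succ_le_succ h

/-- In a proximal minimal flow, any finite list of points can be simultaneously moved
arbitrarily close to any target point. -/
private lemma contract_list {T : Type*} [Group T] {X : Type*} [MetricSpace X] [CompactSpace X]
    [MulAction T X] [ContinuousConstSMul T X]
    (hX : IsMinimalFlow T X) (hprox : ∀ x x' : X, IsProximalPair T x x') (l : List X) :
    ∀ (z : X) (ε : ℝ), 0 < ε → ∃ t : T, ∀ a ∈ l, dist (t • a) z < ε := by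
  induction l with
  | nil =>
    intro z ε hε
    exact ⟨1, fun a ha => absurd ha List.not_mem_nil⟩
  | cons a l ih =>
    intro z ε hε
    -- a sequence of elements bringing all of `l` close to `a`
    choose tn htn using fun n : ℕ => ih a (1 / (n + 1)) (by positivity)
    -- a limit point `w` of `tn n • a`
    obtain ⟨w, -, φ, hφ, hw⟩ :=
      isCompact_univ.tendsto_subseq (x := fun n => tn n • a) (fun n => mem_univ _)
    -- proximality of `a` and `w`
    choose sm hsm using fun m : ℕ => hprox a w (1 / (m + 1)) (by positivity)
    -- a limit point `c` of `sm m • a`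
    obtain ⟨c, -, ψ, hψ, hc⟩ :=
      isCompact_univ.tendsto_subseq (x := fun m => sm m • a) (fun m => mem_univ _)
    -- by minimality, move `c` into the ε/2-ball around z
    obtain ⟨p, hpball, r, rfl⟩ := Metric.dense_iff.mp (hX c) z (ε / 2) (by positivity)
    rw [Metric.mem_ball] at hpball
    -- continuity of `r • ·` at `c`
    obtain ⟨δ₂, hδ₂, h2⟩ :=
      Metric.continuous_iff.mp (continuous_const_smul r) c (ε / 2) (by positivity)
    -- choose a good index m
    obtain ⟨N1, hN1⟩ := Metric.tendsto_atTop.mp hc (δ₂ / 4) (by positivity)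
    obtain ⟨N2, hN2⟩ := exists_nat_one_div_lt (show (0:ℝ) < δ₂ / 4 by positivity)
    set m := max N1 N2 with hm
    set s := sm (ψ m) with hsdef
    have hsa : dist (s • a) c < δ₂ / 4 := hN1 m (le_max_left _ _)
    have hsw : dist (s • w) c < δ₂ / 2 := by
      have h₁ : dist (s • w) (s • a) < (1 : ℝ) / (ψ m + 1) := by
        rw [dist_comm]; exact hsm (ψ m)
      have h₂ : (1 : ℝ) / (ψ m + 1) ≤ 1 / (N2 + 1) :=
        one_div_mono' (le_trans (le_max_right N1 N2) (hψ.le_apply))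
      calc dist (s • w) c ≤ dist (s • w) (s • a) + dist (s • a) c := dist_triangle _ _ _
        _ < 1 / (ψ m + 1) + δ₂ / 4 := by linarith
        _ ≤ 1 / (N2 + 1) + δ₂ / 4 := by linarith
        _ < δ₂ / 2 := by linarith
    -- continuity of `s • ·` at `a` and at `w`
    obtain ⟨δ₁, hδ₁, h1⟩ :=
      Metric.continuous_iff.mp (continuous_const_smul s) a (δ₂ / 2) (by positivity)
    obtain ⟨δ₁', hδ₁', h1'⟩ :=
      Metric.continuous_iff.mp (continuous_const_smul s) w (δ₂ / 2) (by positivity)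
    -- choose a good index n
    obtain ⟨N3, hN3⟩ := Metric.tendsto_atTop.mp hw δ₁' hδ₁'
    obtain ⟨N4, hN4⟩ := exists_nat_one_div_lt hδ₁
    set n := max N3 N4 with hn
    set t := tn (φ n) with htdef
    have hta : dist (t • a) w < δ₁' := hN3 n (le_max_left _ _)
    have htl : ∀ x ∈ l, dist (t • x) a < δ₁ := by
      intro x hx
      have h₁ : dist (t • x) a < (1 : ℝ) / (φ n + 1) := htn (φ n) x hx
      have h₂ : (1 : ℝ) / (φ n + 1) ≤ 1 / (N4 + 1) :=
        one_div_mono' (le_trans (le_max_right N3 N4) (hφ.le_apply))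
      linarith
    refine ⟨r * s * t, ?_⟩
    intro q hq
    have hrw : (r * s * t) • q = r • (s • (t • q)) := by rw [mul_smul, mul_smul]
    have key : ∀ q : X, dist (s • (t • q)) c < δ₂ → dist ((r * s * t) • q) z < ε := by
      intro q hdist
      have h₄ : dist (r • (s • (t • q))) (r • c) < ε / 2 := h2 _ hdist
      calc dist ((r * s * t) • q) z
          ≤ dist (r • (s • (t • q))) (r • c) + dist (r • c) z := by
            rw [mul_smul, mul_smul]; exact dist_triangle _ _ _
        _ < ε := by linarith
    rcases List.mem_cons.mp hq with rfl | hql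
    · apply key
      have h₂ : dist (s • (t • q)) (s • w) < δ₂ / 2 := h1' _ hta
      calc dist (s • (t • q)) c ≤ dist (s • (t • q)) (s • w) + dist (s • w) c :=
            dist_triangle _ _ _
        _ < δ₂ := by linarith
    · apply key
      have h₂ : dist (s • (t • q)) (s • a) < δ₂ / 2 := h1 _ (htl q hql)
      calc dist (s • (t • q)) c ≤ dist (s • (t • q)) (s • a) + dist (s • a) c :=
            dist_triangle _ _ _
        _ < δ₂ := by linarith

/-- The key density lemma: for any point `x` and nonempty open sets `U1, U2`, the set of `y`
whose pair with `x` can be simultaneously moved into `U1 × U2` is dense. -/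
private lemma key_dense {T : Type*} [Group T] {X : Type*} [MetricSpace X] [CompactSpace X]
    [MulAction T X] [ContinuousConstSMul T X]
    (hX : IsMinimalFlow T X) (hprox : ∀ x x' : X, IsProximalPair T x x') (x : X)
    {U1 U2 : Set X} (h1 : IsOpen U1) (h1n : U1.Nonempty) (h2n : U2.Nonempty) :
    Dense {y : X | ∃ t : T, t • x ∈ U1 ∧ t • y ∈ U2} := by
  rw [dense_iff_inter_open]
  rintro V hV ⟨v₀, hv₀⟩
  obtain ⟨ε, hε, hball⟩ := Metric.isOpen_iff.mp hV v₀ hv₀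
  -- cover X by finitely many translates of U1
  have hcov : (univ : Set X) ⊆ ⋃ k : T, (fun z => k • z) ⁻¹' U1 := by
    intro p _
    obtain ⟨_, ⟨k, rfl⟩, hk⟩ := (hX p).exists_mem_open h1 h1n
    exact mem_iUnion.mpr ⟨k, hk⟩
  obtain ⟨K, hK⟩ := isCompact_univ.elim_finite_subcover (fun k : T => (fun z => k • z) ⁻¹' U1)
    (fun k => h1.preimage (continuous_const_smul k)) hcov
  obtain ⟨u, hu⟩ := h2n
  -- contract the points k⁻¹ • u, k ∈ K, into the ball around v₀
  obtain ⟨s, hs⟩ := contract_list hX hprox (K.toList.map (fun k => k⁻¹ • u)) v₀ ε hε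
  -- find k₀ with k₀ • (s⁻¹ • x) ∈ U1
  have hx : s⁻¹ • x ∈ ⋃ k ∈ K, (fun z => k • z) ⁻¹' U1 := hK (mem_univ _)
  obtain ⟨k₀, hk₀K, hk₀⟩ := mem_iUnion₂.mp hx
  refine ⟨s • (k₀⁻¹ • u), ?_, ?_⟩
  · apply hball
    rw [Metric.mem_ball]
    exact hs _ (List.mem_map.mpr ⟨k₀, Finset.mem_toList.mpr hk₀K, rfl⟩)
  · refine ⟨k₀ * s⁻¹, ?_, ?_⟩
    · rw [mul_smul]; exact hk₀
    · have : (k₀ * s⁻¹) • s • k₀⁻¹ • u = u := by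
        rw [mul_smul, inv_smul_smul, smul_inv_smul]
      rw [this]; exact hu

/-- In a proximal minimal flow, for every `x` the set of `y` such that the
orbit closure of `(x,y)` is all of `X × X` is residual. -/
theorem stmt10 {T : Type*} [Group T] [Countable T] [Infinite T]
    {X : Type*} [MetricSpace X] [CompactSpace X] [MulAction T X] [ContinuousConstSMul T X]
    (hX : IsMinimalFlow T X) (hprox : ∀ x x' : X, IsProximalPair T x x') :
    ∀ x : X, {y : X | closure (MulAction.orbit T ((x, y) : X × X)) = Set.univ} ∈
      residual X := by
  intro x
  obtain ⟨b, hbc, hbne, hb⟩ := TopologicalSpace.exists_countable_basis X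
  have hopen : ∀ (U1 U2 : Set X), IsOpen U1 → IsOpen U2 →
      IsOpen {y : X | ∃ t : T, t • x ∈ U1 ∧ t • y ∈ U2} := by
    intro U1 U2 h1 h2
    have : {y : X | ∃ t : T, t • x ∈ U1 ∧ t • y ∈ U2} =
        ⋃ t : T, {y : X | t • x ∈ U1 ∧ t • y ∈ U2} := by
      ext y; simp [Set.mem_iUnion]
    rw [this]
    refine isOpen_iUnion fun t => ?_
    by_cases hx : t • x ∈ U1
    · have : {y : X | t • x ∈ U1 ∧ t • y ∈ U2} = (fun y => t • y) ⁻¹' U2 := by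
        ext y; simp [hx]
      rw [this]; exact h2.preimage (continuous_const_smul t)
    · have : {y : X | t • x ∈ U1 ∧ t • y ∈ U2} = ∅ := by
        ext y; simp [hx]
      rw [this]; exact isOpen_empty
  have hmem : (⋂ U1 ∈ b, ⋂ U2 ∈ b, {y : X | ∃ t : T, t • x ∈ U1 ∧ t • y ∈ U2}) ∈
      residual X := by
    refine (countable_bInter_mem hbc).mpr fun U1 hU1 => (countable_bInter_mem hbc).mpr
      fun U2 hU2 => ?_
    refine residual_of_dense_open (hopen U1 U2 (hb.isOpen hU1) (hb.isOpen hU2)) ?_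
    exact key_dense hX hprox x (hb.isOpen hU1)
      (Set.nonempty_iff_ne_empty.mpr fun h => hbne (h ▸ hU1))
      (Set.nonempty_iff_ne_empty.mpr fun h => hbne (h ▸ hU2))
  refine Filter.mem_of_superset hmem ?_
  intro y hy
  simp only [Set.mem_iInter, Set.mem_setOf_eq] at hy
  show closure (MulAction.orbit T ((x, y) : X × X)) = Set.univ
  rw [← dense_iff_closure_eq]
  refine (hb.prod hb).dense_iff.mpr ?_
  rintro o ho -
  obtain ⟨U1, hU1, U2, hU2, rfl⟩ := ho
  obtain ⟨t, ht1, ht2⟩ := hy U1 hU1 U2 hU2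
  refine ⟨t • ((x, y) : X × X), ?_, MulAction.mem_orbit _ t⟩
  rw [Prod.smul_mk]
  exact ⟨ht1, ht2⟩
end

section
/- Let π:(X,T)→(Y,T) be a factor map between minimal flows. If there exists a point y₀∈Y such that every pair of points x₁,x₂∈π^{-1}(y₀) is proximal, then π is a proximal extension, i.e., every pair (x,x') with π(x)=π(x') is proximal. -/
/-- If some fiber of an extension of minimal flows consists of pairwise
proximal points, then the extension is proximal. -/
theorem stmt14 {T : Type*} [Group T] [Countable T] [Infinite T]
    {X Y : Type*} [MetricSpace X] [CompactSpace X] [MulAction T X] [ContinuousConstSMul T X]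
    [MetricSpace Y] [CompactSpace Y] [MulAction T Y] [ContinuousConstSMul T Y]
    (hX : IsMinimalFlow T X) (hY : IsMinimalFlow T Y)
    (π : X → Y) (hπ : IsFactorMap T π)
    (y₀ : Y) (h : ∀ x₁ ∈ π ⁻¹' {y₀}, ∀ x₂ ∈ π ⁻¹' {y₀}, IsProximalPair T x₁ x₂) :
    IsProximalExt T π := by
  obtain ⟨hcont, hsurj, hequiv⟩ := hπ
  intro x x' hxx
  set y := π x with hy
  -- y₀ is a limit of a sequence of points t n • y in the orbit of y
  have hy₀ : y₀ ∈ closure (MulAction.orbit T y) := hY y y₀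
  obtain ⟨u, hu_mem, hu_lim⟩ := mem_closure_iff_seq_limit.mp hy₀
  choose t ht using fun n => MulAction.mem_orbit_iff.mp (hu_mem n)
  -- extract convergent subsequence of (t n • x, t n • x') in compact X × X
  obtain ⟨p, -, φ, hφ, hlim⟩ := IsCompact.tendsto_subseq (isCompact_univ (X := X × X))
    (x := fun n => (t n • x, t n • x')) (fun n => Set.mem_univ _)
  have hlim1 : Filter.Tendsto (fun k => t (φ k) • x) Filter.atTop (nhds p.1) :=
    (continuous_fst.tendsto p).comp hlim
  have hlim2 : Filter.Tendsto (fun k => t (φ k) • x') Filter.atTop (nhds p.2) :=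
    (continuous_snd.tendsto p).comp hlim
  have hylim : Filter.Tendsto (fun k => t (φ k) • y) Filter.atTop (nhds y₀) := by
    have : Filter.Tendsto (fun k => u (φ k)) Filter.atTop (nhds y₀) :=
      hu_lim.comp hφ.tendsto_atTop
    simpa only [ht] using this
  have hp1 : π p.1 = y₀ := by
    refine tendsto_nhds_unique ((hcont.tendsto p.1).comp hlim1) ?_
    have : (fun k => π (t (φ k) • x)) = fun k => t (φ k) • y := by
      funext k; rw [hequiv, hy]
    rw [Function.comp_def, this]; exact hylim
  have hp2 : π p.2 = y₀ := by
    refine tendsto_nhds_unique ((hcont.tendsto p.2).comp hlim2) ?_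
    have : (fun k => π (t (φ k) • x')) = fun k => t (φ k) • y := by
      funext k; rw [hequiv, ← hxx, hy]
    rw [Function.comp_def, this]; exact hylim
  have hprox : IsProximalPair T p.1 p.2 := h p.1 hp1 p.2 hp2
  intro ε hε
  obtain ⟨s, hs⟩ := hprox (ε / 3) (by linarith)
  have hc : Continuous fun z : X => s • z := continuous_const_smul s
  have h1 : Filter.Tendsto (fun k => s • (t (φ k) • x)) Filter.atTop (nhds (s • p.1)) :=
    (hc.tendsto p.1).comp hlim1
  have h2 : Filter.Tendsto (fun k => s • (t (φ k) • x')) Filter.atTop (nhds (s • p.2)) :=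
    (hc.tendsto p.2).comp hlim2
  have e1 := Metric.tendsto_atTop.mp h1 (ε / 3) (by linarith)
  have e2 := Metric.tendsto_atTop.mp h2 (ε / 3) (by linarith)
  obtain ⟨N1, hN1⟩ := e1
  obtain ⟨N2, hN2⟩ := e2
  set k := max N1 N2
  refine ⟨s * t (φ k), ?_⟩
  have d1 := hN1 k (le_max_left _ _)
  have d2 := hN2 k (le_max_right _ _)
  have key : dist (s • (t (φ k) • x)) (s • (t (φ k) • x')) < ε := by
    calc dist (s • (t (φ k) • x)) (s • (t (φ k) • x'))
        ≤ dist (s • (t (φ k) • x)) (s • p.1) + dist (s • p.1) (s • p.2)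
          + dist (s • p.2) (s • (t (φ k) • x')) := dist_triangle4 _ _ _ _
      _ < ε / 3 + ε / 3 + ε / 3 := by
          rw [dist_comm] at d2
          exact add_lt_add (add_lt_add d1 hs) d2
      _ = ε := by ring
  simpa only [mul_smul] using key
end

section
/- Let π:(X,T)→(Y,T) be a distal extension of minimal flows. If π is not finite to one (i.e., some fiber of π is infinite), then every fiber π^{-1}(y) is a perfect subset of X. -/
/-! ### Auxiliary machinery: the Ellis-type action of `Ultrafilter T` on compact flows -/

open Filter MulAction Set Topology

attribute [local instance] Ultrafilter.mul Ultrafilter.semigroup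

section EllisAction

variable {T : Type*} [Group T]
variable {Z : Type*} [TopologicalSpace Z] [T2Space Z] [CompactSpace Z]
  [MulAction T Z] [ContinuousConstSMul T Z]

/-- The Ellis action of an ultrafilter on `T` on a compact Hausdorff `T`-flow:
the limit of `t • z` along the ultrafilter. -/
noncomputable def uact (Q : Ultrafilter T) (z : Z) : Z :=
  Ultrafilter.extend (fun t : T => t • z) Q

theorem uact_tendsto (Q : Ultrafilter T) (z : Z) :
    Tendsto (fun t : T => t • z) ↑Q (𝓝 (uact Q z)) := by
  have h : ↑(Q.map fun t : T => t • z) ≤ 𝓝 (uact Q z) :=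
    ultrafilter_extend_eq_iff.mp rfl
  rwa [Ultrafilter.coe_map] at h

theorem uact_unique {Q : Ultrafilter T} {z c : Z}
    (h : Tendsto (fun t : T => t • z) ↑Q (𝓝 c)) : uact Q z = c :=
  tendsto_nhds_unique (uact_tendsto Q z) h

theorem continuous_uact (z : Z) : Continuous fun Q : Ultrafilter T => uact Q z :=
  continuous_ultrafilter_extend _

theorem uact_pure (t : T) (z : Z) : uact (pure t) z = t • z :=
  congrFun (ultrafilter_extend_extends fun s : T => s • z) t

theorem uact_mul (Q R : Ultrafilter T) (z : Z) :
    uact (Q * R) z = uact Q (uact R z) := by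
  refine uact_unique (tendsto_nhds.mpr fun O hO hmem => ?_)
  have h1 : ∀ᶠ t in (Q : Filter T), t • uact R z ∈ O :=
    (uact_tendsto Q (uact R z)).eventually (hO.eventually_mem hmem)
  have h2 : ∀ᶠ m in ((Q * R : Ultrafilter T) : Filter T), m • z ∈ O := by
    rw [Ultrafilter.eventually_mul]
    filter_upwards [h1] with t ht
    have h3 : Tendsto (fun s : T => t • s • z) ↑R (𝓝 (t • uact R z)) :=
      ((continuous_const_smul t).tendsto _).comp (uact_tendsto R z)
    filter_upwards [h3.eventually (hO.eventually_mem ht)] with s hs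
    rw [mul_smul]
    exact hs
  exact h2

theorem exists_uact_eq {z w : Z} (hw : w ∈ closure (orbit T z)) :
    ∃ Q : Ultrafilter T, uact Q z = w := by
  have hne : (comap (fun t : T => t • z) (𝓝 w)).NeBot := by
    refine comap_neBot fun s hs => ?_
    obtain ⟨p, hps, hporb⟩ := mem_closure_iff_nhds.mp hw s hs
    obtain ⟨t, ht⟩ := MulAction.mem_orbit_iff.mp hporb
    exact ⟨t, by rwa [ht]⟩
  refine ⟨Ultrafilter.of (comap (fun t : T => t • z) (𝓝 w)),
    uact_unique (Filter.tendsto_def.mpr fun s hs => ?_)⟩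
  exact Ultrafilter.of_le _ (preimage_mem_comap hs)

end EllisAction

section DistalAux

variable {T : Type*} [Group T]
variable {X Y : Type*} [MetricSpace X] [CompactSpace X] [MulAction T X]
  [ContinuousConstSMul T X]
  [MetricSpace Y] [CompactSpace Y] [MulAction T Y] [ContinuousConstSMul T Y]

theorem isProximalPair_of_uact_eq {Q : Ultrafilter T} {a b : X}
    (h : uact Q a = uact Q b) : IsProximalPair T a b := by
  intro ε hε
  have h1 := (uact_tendsto Q a).eventually
    (Metric.ball_mem_nhds (uact Q a) (half_pos hε))
  have h2 := (uact_tendsto Q b).eventually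
    (Metric.ball_mem_nhds (uact Q b) (half_pos hε))
  obtain ⟨t, ht1, ht2⟩ := (h1.and h2).exists
  refine ⟨t, ?_⟩
  calc dist (t • a) (t • b)
      ≤ dist (t • a) (uact Q b) + dist (uact Q b) (t • b) := dist_triangle _ _ _
    _ < ε / 2 + ε / 2 := by
        refine add_lt_add ?_ ?_
        · rw [← h]; exact ht1
        · rw [dist_comm]; exact ht2
    _ = ε := add_halves ε

variable {π : X → Y}

theorem uact_map (hπc : Continuous π) (heq : ∀ (t : T) (x : X), π (t • x) = t • π x)
    (Q : Ultrafilter T) (x : X) : π (uact Q x) = uact Q (π x) := by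
  refine (uact_unique ?_).symm
  have h := (hπc.tendsto (uact Q x)).comp (uact_tendsto Q x)
  simpa only [Function.comp_def, heq] using h

theorem uact_inj_fiber (hdistal : IsDistalExt T π) (Q : Ultrafilter T) {a b : X}
    (hab : π a = π b) (h : uact Q a = uact Q b) : a = b := by
  by_contra hne
  exact hdistal a b hab hne (isProximalPair_of_uact_eq h)

/-- For an ultrafilter `Q` fixing `y`, the action of `Q` on the fiber over `y`
admits a left inverse given by the action of another ultrafilter fixing `y`.
This is proved by finding an idempotent in the compact right-topological
subsemigroup `{R | R fixes y} * Q`; by distality an idempotent acts as the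
identity on the fiber. -/
theorem exists_uact_left_inverse (hπc : Continuous π)
    (heq : ∀ (t : T) (x : X), π (t • x) = t • π x) (hdistal : IsDistalExt T π)
    {y : Y} {Q : Ultrafilter T} (hQ : uact Q y = y) :
    ∃ G : Ultrafilter T, uact G y = y ∧ ∀ a : X, π a = y → uact G (uact Q a) = a := by
  classical
  set S : Set (Ultrafilter T) := {R | uact R y = y} with hSdef
  have hSmul : ∀ R₁ ∈ S, ∀ R₂ ∈ S, R₁ * R₂ ∈ S := by
    intro R₁ h1 R₂ h2
    show uact (R₁ * R₂) y = y
    rw [uact_mul, h2, h1]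
  have hQS : Q ∈ S := hQ
  have hSclosed : IsClosed S := isClosed_eq (continuous_uact y) continuous_const
  have hpure1 : (pure 1 : Ultrafilter T) ∈ S := by
    show uact (pure 1) y = y
    rw [uact_pure, one_smul]
  have hPco : IsCompact ((· * Q) '' S) :=
    hSclosed.isCompact.image (Ultrafilter.continuous_mul_left Q)
  have hPne : ((· * Q) '' S).Nonempty := ⟨pure 1 * Q, pure 1, hpure1, rfl⟩
  have hPmul : ∀ a ∈ (· * Q) '' S, ∀ b ∈ (· * Q) '' S, a * b ∈ (· * Q) '' S := by
    rintro _ ⟨R₁, hR₁, rfl⟩ _ ⟨R₂, hR₂, rfl⟩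
    refine ⟨R₁ * (Q * R₂), hSmul _ hR₁ _ (hSmul _ hQS _ hR₂), ?_⟩
    simp only [mul_assoc]
  obtain ⟨V, hVP, hVidem⟩ := exists_idempotent_in_compact_subsemigroup
    (fun R => Ultrafilter.continuous_mul_left R) ((· * Q) '' S) hPne hPco hPmul
  have hVS : V ∈ S := by
    obtain ⟨G, hG, rfl⟩ := hVP
    show uact (G * Q) y = y
    rw [uact_mul, hQ]
    exact hG
  have hVfix : ∀ a : X, π a = y → uact V a = a := by
    intro a ha
    have hmem : π (uact V a) = y := by
      rw [uact_map hπc heq, ha]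
      exact hVS
    have h2 : uact V (uact V a) = uact V a := by
      rw [← uact_mul, hVidem]
    exact uact_inj_fiber hdistal V (hmem.trans ha.symm) h2
  obtain ⟨G, hGS, hGQ⟩ := hVP
  refine ⟨G, hGS, fun a ha => ?_⟩
  have h3 := hVfix a ha
  rw [← hGQ, uact_mul] at h3
  exact h3

end DistalAux

set_option maxHeartbeats 1000000 in
/-- A distal extension of minimal flows which is not finite to one has all
fibers perfect. -/
theorem stmt18 {T : Type*} [Group T] [Countable T] [Infinite T]
    {X Y : Type*} [MetricSpace X] [CompactSpace X] [MulAction T X] [ContinuousConstSMul T X]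
    [MetricSpace Y] [CompactSpace Y] [MulAction T Y] [ContinuousConstSMul T Y]
    (hX : IsMinimalFlow T X) (hY : IsMinimalFlow T Y)
    (π : X → Y) (hπ : IsFactorMap T π) (hdistal : IsDistalExt T π)
    (hnf : ∃ y : Y, (π ⁻¹' {y}).Infinite) :
    ∀ y : Y, Perfect (π ⁻¹' {y}) := by
  classical
  obtain ⟨hπc, hπs, heq⟩ := hπ
  intro y
  refine ⟨isClosed_singleton.preimage hπc, ?_⟩
  intro x hx
  have hxy : π x = y := hx
  by_contra hacc
  rw [accPt_iff_nhds] at hacc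
  push_neg at hacc
  obtain ⟨O, hO, hOx⟩ := hacc
  -- Step A : the fiber over `y` is infinite
  obtain ⟨y₀, hy₀⟩ := hnf
  obtain ⟨a₀, ha₀⟩ := hy₀.nonempty
  obtain ⟨Q₀, hQ₀⟩ := exists_uact_eq (hX a₀ x)
  have ha₀y : π a₀ = y₀ := ha₀
  have hQ₀y : uact Q₀ y₀ = y := by
    rw [← ha₀y, ← uact_map hπc heq, hQ₀, hxy]
  have himg : uact Q₀ '' (π ⁻¹' {y₀}) ⊆ π ⁻¹' {y} := by
    rintro _ ⟨b, hb, rfl⟩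
    have hb' : π b = y₀ := hb
    show π (uact Q₀ b) ∈ ({y} : Set Y)
    rw [uact_map hπc heq, hb', hQ₀y]
    exact rfl
  have hinj : Set.InjOn (uact Q₀) (π ⁻¹' {y₀}) := by
    intro a ha b hb h
    exact uact_inj_fiber hdistal Q₀
      ((show π a = y₀ from ha).trans (show π b = y₀ from hb).symm) h
  have hFinf : (π ⁻¹' {y}).Infinite :=
    Set.Infinite.mono himg ((Set.infinite_image_iff hinj).mpr hy₀)
  -- Step B : an injective sequence in the fiber, and ultrafilters sending its points to `x`
  let w : ℕ ↪ ↥(π ⁻¹' {y}) := Set.Infinite.natEmbedding _ hFinf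
  have hwF : ∀ n, π (w n : X) = y := fun n => (w n).2
  choose Q hQ using fun n => exists_uact_eq (hX (w n : X) x)
  have hQy : ∀ n, uact (Q n) y = y := fun n => by
    rw [← hwF n, ← uact_map hπc heq, hQ n, hxy]
    exact (hwF n).symm
  -- Step C : a limit ultrafilter along a nonprincipal ultrafilter on ℕ
  obtain ⟨U, hUle⟩ : ∃ U : Ultrafilter ℕ, ↑U ≤ (Filter.cofinite : Filter ℕ) :=
    ⟨Ultrafilter.of _, Ultrafilter.of_le _⟩
  obtain ⟨Qs, -, hQs⟩ := isCompact_univ.ultrafilter_le_nhds (U.map Q)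
    (by rw [Filter.le_principal_iff]; exact Filter.univ_mem)
  have hTend : Tendsto Q ↑U (𝓝 Qs) := by
    rwa [Ultrafilter.coe_map] at hQs
  have hQsy : uact Qs y = y := by
    have h1 : Tendsto (fun n => uact (Q n) y) ↑U (𝓝 (uact Qs y)) :=
      ((continuous_uact y).tendsto Qs).comp hTend
    have h2 : Tendsto (fun n => uact (Q n) y) ↑U (𝓝 y) := by
      simp only [hQy]
      exact tendsto_const_nhds
    exact tendsto_nhds_unique h1 h2
  -- Step D : by the left-inverse lemma, `x` is in the image of the fiber under `uact Qs`
  obtain ⟨G, hGy, hGQ⟩ := exists_uact_left_inverse hπc heq hdistal hQsy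
  have hzF : π (uact G x) = y := by
    rw [uact_map hπc heq, hxy]
    exact hGy
  have hQsz : uact Qs (uact G x) = x := by
    have h1 : uact G (uact Qs (uact G x)) = uact G x := hGQ _ hzF
    have hmem : π (uact Qs (uact G x)) = y := by
      rw [uact_map hπc heq, hzF]
      exact hQsy
    exact uact_inj_fiber hdistal G (hmem.trans hxy.symm) h1
  -- Step E : evaluation at the fixed point `uact G x` gives the contradiction
  have h6' : Tendsto (fun n => uact (Q n) (uact G x)) ↑U (𝓝 (uact Qs (uact G x))) :=
    ((continuous_uact (uact G x)).tendsto Qs).comp hTend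
  have h6 : Tendsto (fun n => uact (Q n) (uact G x)) ↑U (𝓝 x) := by
    rwa [hQsz] at h6'
  have h7 : ∀ᶠ n in ↑U, uact (Q n) (uact G x) ∈ O := h6.eventually_mem hO
  have h8 : ∀ᶠ n in ↑U, (w n : X) = uact G x := by
    filter_upwards [h7] with n hn
    have hmem : uact (Q n) (uact G x) ∈ π ⁻¹' {y} := by
      show π (uact (Q n) (uact G x)) ∈ ({y} : Set Y)
      rw [uact_map hπc heq, hzF, hQy n]
      exact rfl
    have hx' : uact (Q n) (uact G x) = x := hOx _ ⟨hn, hmem⟩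
    refine uact_inj_fiber hdistal (Q n) ?_ ?_
    · rw [hwF n, hzF]
    · rw [hQ n, hx']
  have hsub : {n : ℕ | (w n : X) = uact G x}.Subsingleton := by
    intro m hm n hn
    exact w.injective (Subtype.ext (hm.trans hn.symm))
  have hcompl : {n : ℕ | (w n : X) = uact G x}ᶜ ∈ U :=
    hUle hsub.finite.compl_mem_cofinite
  have hmemU : {n : ℕ | (w n : X) = uact G x} ∈ U := h8
  exact (Ultrafilter.compl_mem_iff_notMem.mp hcompl) hmemU
end
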